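/- arXiv:1707.08918 — 5 statements merged into one kernel-verified Lean document; each statement's English description precedes it below -/
import Mathlib

section
/- If M is any module of a graph G, then the modules of the induced subgraph G[M] are exactly the modules of G that are contained in M. -/
open SimpleGraph

/-- The bull graph: vertices a,b,c,d,e = 0,1,2,3,4; edges ab,bc,cd,be,ce. -/
def bull : SimpleGraph (Fin 5) :=
  SimpleGraph.fromEdgeSet {s(0,1), s(1,2), s(2,3), s(1,4), s(2,4)}

/-- The house graph: complement of the path on five vertices. -/
def house : SimpleGraph (Fin 5) := (SimpleGraph.pathGraph 5)ᶜ

/-- `G` contains no induced subgraph isomorphic to `F`. -/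
def FreeOf {V W : Type*} (G : SimpleGraph V) (F : SimpleGraph W) : Prop :=
  ¬ ∃ f : W ↪ V, ∀ a b : W, G.Adj (f a) (f b) ↔ F.Adj a b

/-- A homogeneous set: every outside vertex is complete or anticomplete to it. -/
def IsHomogSet {V : Type*} (G : SimpleGraph V) (S : Set V) : Prop :=
  ∀ v ∉ S, (∀ s ∈ S, G.Adj v s) ∨ (∀ s ∈ S, ¬ G.Adj v s)

/-- A proper homogeneous set: at least two vertices and not all of `V`. -/
def IsProperHomogSet {V : Type*} (G : SimpleGraph V) (S : Set V) : Prop :=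
  IsHomogSet G S ∧ S.Nontrivial ∧ S ≠ Set.univ

/-- A stable (independent) set. -/
def IsStableSet {V : Type*} (G : SimpleGraph V) (S : Set V) : Prop :=
  S.Pairwise fun u v => ¬ G.Adj u v

/-- A module: a nonempty homogeneous set that overlaps no homogeneous set. -/
def IsModuleSet {V : Type*} (G : SimpleGraph V) (M : Set V) : Prop :=
  M.Nonempty ∧ IsHomogSet G M ∧
    ∀ S : Set V, IsHomogSet G S → S ⊆ M ∨ M ⊆ S ∨ S ∩ M = ∅

/-- A quasi-maximal module: a module, different from `V`, such that the only
module strictly containing it is `V`. -/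
def IsQuasiMaxModule {V : Type*} (G : SimpleGraph V) (M : Set V) : Prop :=
  IsModuleSet G M ∧ M ≠ Set.univ ∧
    ∀ S : Set V, IsModuleSet G S → M ⊂ S → S = Set.univ

/-- A clique cover: a partition of the vertex set into cliques. -/
def IsCliqueCover {V : Type*} (G : SimpleGraph V) (C : Set (Set V)) : Prop :=
  Setoid.IsPartition C ∧ ∀ Q ∈ C, G.IsClique Q

/-- `cc G`: the minimum number of cliques in a clique cover of `G`. -/
noncomputable def cliqueCoverNumber {V : Type*} (G : SimpleGraph V) : ℕ :=
  sInf {n | ∃ C : Set (Set V), IsCliqueCover G C ∧ C.ncard = n}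

/-- `S` is complete to `T`: every vertex of `S` is adjacent to every vertex of `T`. -/
def CompleteTo {V : Type*} (G : SimpleGraph V) (S T : Set V) : Prop :=
  ∀ s ∈ S, ∀ t ∈ T, G.Adj s t

/-- `S` is anticomplete to `T`: no vertex of `S` is adjacent to a vertex of `T`. -/
def AnticompleteTo {V : Type*} (G : SimpleGraph V) (S T : Set V) : Prop :=
  ∀ s ∈ S, ∀ t ∈ T, ¬ G.Adj s t

/-- The 5-tuple setup from the paper: five nonempty pairwise disjoint sets
`A 0, …, A 4` (corresponding to `A_1, …, A_5`, indices modulo 5) with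
`A i` complete to `A (i+1)` for `i ∈ {0,1,2,3}`, `A i` anticomplete to
`A (i+2)` for all `i`, and `A 4` complete or anticomplete to `A 0`. -/
def GoodTuple {V : Type*} (G : SimpleGraph V) (A : Fin 5 → Set V) : Prop :=
  (∀ i, (A i).Nonempty) ∧
  (Pairwise fun i j => Disjoint (A i) (A j)) ∧
  (∀ i : Fin 5, i ≠ 4 → CompleteTo G (A i) (A (i + 1))) ∧
  (∀ i : Fin 5, AnticompleteTo G (A i) (A (i + 2))) ∧
  (CompleteTo G (A 4) (A 0) ∨ AnticompleteTo G (A 4) (A 0))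

/-- A good tuple whose union `A` is inclusionwise maximal among all good tuples. -/
def MaximalGoodTuple {V : Type*} (G : SimpleGraph V) (A : Fin 5 → Set V) : Prop :=
  GoodTuple G A ∧ ∀ A' : Fin 5 → Set V, GoodTuple G A' → ¬ (⋃ i, A i) ⊂ (⋃ i, A' i)

/-- The set `B` of vertices outside `A` that are complete to `A`. -/
def Bset {V : Type*} (G : SimpleGraph V) (A : Fin 5 → Set V) : Set V :=
  {v | v ∉ (⋃ i, A i) ∧ ∀ a ∈ ⋃ i, A i, G.Adj v a}

/-- If `M` is any module of a graph `G`, then the modules of the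
induced subgraph `G[M]` are exactly the modules of `G` that are contained in `M`. -/
theorem stmt1 {V : Type*} [Fintype V] (G : SimpleGraph V) (M : Set V)
    (hM : IsModuleSet G M) (T : Set ↥M) :
    IsModuleSet (G.induce M) T ↔ IsModuleSet G (Subtype.val '' T) := by
  obtain ⟨hMne, hMhom, hMmod⟩ := hM
  constructor
  · rintro ⟨hTne, hThom, hTmod⟩
    refine ⟨hTne.image _, ?_, ?_⟩
    · rintro v hv
      by_cases hvM : v ∈ M
      · rcases hThom ⟨v, hvM⟩ (fun h => hv ⟨⟨v, hvM⟩, h, rfl⟩) with h | h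
        · left; rintro s ⟨⟨s, hsM⟩, hs, rfl⟩
          exact h _ hs
        · right; rintro s ⟨⟨s, hsM⟩, hs, rfl⟩
          exact h _ hs
      · rcases hMhom v hvM with h | h
        · left; rintro s ⟨⟨s, hsM⟩, hs, rfl⟩; exact h s hsM
        · right; rintro s ⟨⟨s, hsM⟩, hs, rfl⟩; exact h s hsM
    · intro S hS
      rcases hMmod S hS with hSM | hMS | hdisj
      · set S' : Set ↥M := {x | (x : V) ∈ S} with hS'def
        have hS'hom : IsHomogSet (G.induce M) S' := by
          intro u hu
          rcases hS u hu with h | h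
          · left; intro s hs; exact h s hs
          · right; intro s hs; exact h s hs
        rcases hTmod S' hS'hom with h | h | h
        · left; intro v hv
          exact ⟨⟨v, hSM hv⟩, h hv, rfl⟩
        · right; left; rintro v ⟨x, hx, rfl⟩; exact h hx
        · right; right
          ext v
          simp only [Set.mem_inter_iff, Set.mem_empty_iff_false, iff_false]
          rintro ⟨hvS, ⟨x, hx, rfl⟩⟩
          have : x ∈ S' ∩ T := ⟨hvS, hx⟩
          rw [h] at this; exact this
      · right; left
        rintro v ⟨x, hx, rfl⟩; exact hMS x.2
      · right; right
        apply Set.eq_empty_of_subset_empty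
        rw [← hdisj]
        rintro v ⟨hv, x, hx, rfl⟩
        exact ⟨hv, x.2⟩
  · rintro ⟨hTne, hThom, hTmod⟩
    have hTne' : T.Nonempty := by
      obtain ⟨v, x, hx, rfl⟩ := hTne; exact ⟨x, hx⟩
    refine ⟨hTne', ?_, ?_⟩
    · intro u hu
      have hu' : (u : V) ∉ Subtype.val '' T := by
        rintro ⟨x, hx, hxeq⟩
        exact hu (Subtype.val_injective hxeq ▸ hx)
      rcases hThom u hu' with h | h
      · left; intro s hs; exact h s ⟨s, hs, rfl⟩
      · right; intro s hs; exact h s ⟨s, hs, rfl⟩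
    · intro S hS
      have hShom : IsHomogSet G (Subtype.val '' S) := by
        intro v hv
        by_cases hvM : v ∈ M
        · have hns : (⟨v, hvM⟩ : ↥M) ∉ S := fun h => hv ⟨_, h, rfl⟩
          rcases hS _ hns with h | h
          · left; rintro s ⟨x, hx, rfl⟩; exact h x hx
          · right; rintro s ⟨x, hx, rfl⟩; exact h x hx
        · rcases hMhom v hvM with h | h
          · left; rintro s ⟨x, hx, rfl⟩; exact h x x.2
          · right; rintro s ⟨x, hx, rfl⟩; exact h x x.2
      rcases hTmod _ hShom with h | h | h
      · left; intro x hx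
        obtain ⟨y, hy, hyx⟩ := h ⟨x, hx, rfl⟩
        exact Subtype.val_injective hyx ▸ hy
      · right; left; intro x hx
        obtain ⟨y, hy, hyx⟩ := h ⟨x, hx, rfl⟩
        exact Subtype.val_injective hyx ▸ hy
      · right; right
        ext x
        simp only [Set.mem_inter_iff, Set.mem_empty_iff_false, iff_false]
        rintro ⟨hxS, hxT⟩
        have : (x : V) ∈ (Subtype.val '' S) ∩ (Subtype.val '' T) :=
          ⟨⟨x, hxS, rfl⟩, ⟨x, hxT, rfl⟩⟩
        rw [h] at this; exact this
end

section
/- If both a graph G and its complement are connected, then every proper homogeneous set of G is included in a quasi-maximal module of G. -/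
open SimpleGraph

/-!
Take a maximal homogeneous set `M ≠ V` containing `S`. If a homogeneous set `T` overlapped `M`
without either containing the other, then `M ∪ T` would be homogeneous, so `M ∪ T = V` by
maximality. But then `M \ T` is complete or anticomplete to its complement `T`, which
disconnects `Gᶜ` or `G`. Hence `M` is a module, and it is quasi-maximal since any larger
module `≠ V` would be a larger proper homogeneous set.
-/

namespace IsHomogSet

variable {V : Type*} {G : SimpleGraph V} {M T : Set V}

theorem union (hM : IsHomogSet G M) (hT : IsHomogSet G T) (hMT : (M ∩ T).Nonempty) :
    IsHomogSet G (M ∪ T) := by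
  obtain ⟨w, hwM, hwT⟩ := hMT
  intro v hv
  rw [Set.mem_union, not_or] at hv
  rcases hM v hv.1 with h1 | h1 <;> rcases hT v hv.2 with h2 | h2
  · exact Or.inl fun s hs => hs.elim (h1 s) (h2 s)
  · exact absurd (h1 w hwM) (h2 w hwT)
  · exact absurd (h2 w hwT) (h1 w hwM)
  · exact Or.inr fun s hs => hs.elim (h1 s) (h2 s)

/-- Fix `b ∈ T \ M`: a vertex `a ∈ M \ T` is complete to `T` iff `a ~ b`, and `b` sees all of
`M` alike. -/
theorem completeTo_or_anticompleteTo_diff (hM : IsHomogSet G M) (hT : IsHomogSet G T)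
    (hTM : (T \ M).Nonempty) :
    CompleteTo G (M \ T) T ∨ AnticompleteTo G (M \ T) T := by
  obtain ⟨b, hbT, hbM⟩ := hTM
  rcases hM b hbM with hb | hb
  · exact Or.inl fun a ha => (hT a ha.2).resolve_right fun h => h b hbT (hb a ha.1).symm
  · exact Or.inr fun a ha => (hT a ha.2).resolve_left fun h => hb a ha.1 (h b hbT).symm

end IsHomogSet

theorem SimpleGraph.Connected.exists_adj_of_nonempty_compl {V : Type*} {G : SimpleGraph V}
    (hG : G.Connected) {A : Set V} (hA : A.Nonempty) (hAc : Aᶜ.Nonempty) :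
    ∃ a ∈ A, ∃ b ∈ Aᶜ, G.Adj a b := by
  obtain ⟨a, ha⟩ := hA
  obtain ⟨b, hb⟩ := hAc
  obtain ⟨d, -, hd1, hd2⟩ := (hG.preconnected a b).some.exists_boundary_dart A ha hb
  exact ⟨d.fst, hd1, d.snd, hd2, d.adj⟩

theorem not_completeTo_or_anticompleteTo_compl {V : Type*} {G : SimpleGraph V}
    (hG : G.Connected) (hGc : Gᶜ.Connected) {A : Set V} (hA : A.Nonempty)
    (hAc : Aᶜ.Nonempty) :
    ¬ (CompleteTo G A Aᶜ ∨ AnticompleteTo G A Aᶜ) := by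
  rintro (hcomplete | hanticomplete)
  · obtain ⟨a, ha, b, hb, hab⟩ := hGc.exists_adj_of_nonempty_compl hA hAc
    exact hab.2 (hcomplete a ha b hb)
  · obtain ⟨a, ha, b, hb, hab⟩ := hG.exists_adj_of_nonempty_compl hA hAc
    exact hanticomplete a ha b hb hab

theorem IsHomogSet.union_ne_univ {V : Type*} {G : SimpleGraph V} (hG : G.Connected)
    (hGc : Gᶜ.Connected) {M T : Set V} (hM : IsHomogSet G M) (hT : IsHomogSet G T)
    (hMT : (M ∩ T).Nonempty) (hMnT : (M \ T).Nonempty) (hTnM : (T \ M).Nonempty) :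
    M ∪ T ≠ Set.univ := by
  intro hU
  have hcompl : (M \ T)ᶜ = T := by
    ext v
    have hv : v ∈ M ∪ T := hU ▸ Set.mem_univ v
    simp only [Set.mem_compl_iff, Set.mem_sdiff, not_and, not_not]
    exact ⟨fun h => hv.elim h id, fun h _ => h⟩
  have hcut := not_completeTo_or_anticompleteTo_compl hG hGc hMnT
  rw [hcompl] at hcut
  exact hcut (hMT.mono Set.inter_subset_right) (hM.completeTo_or_anticompleteTo_diff hT hTnM)

theorem isQuasiMaxModule_of_maximal {V : Type*} {G : SimpleGraph V} (hG : G.Connected)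
    (hGc : Gᶜ.Connected) {S M : Set V}
    (hM : Maximal (fun N => IsHomogSet G N ∧ S ⊆ N ∧ N ≠ Set.univ) M) (hMne : M.Nonempty) :
    IsQuasiMaxModule G M := by
  obtain ⟨⟨hMhomog, hSM, hMuniv⟩, hmax⟩ := hM
  refine ⟨⟨hMne, hMhomog, fun T hT => ?_⟩, hMuniv, fun N hN hMN => ?_⟩
  · by_cases hTM : (T ∩ M).Nonempty
    · by_cases hTsub : T ⊆ M
      · exact Or.inl hTsub
      refine Or.inr (Or.inl (by_contra fun hMsub => hTsub ?_))
      have hMT : (M ∩ T).Nonempty := Set.inter_comm T M ▸ hTM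
      have hunion_ne_univ := hMhomog.union_ne_univ hG hGc hT hMT (Set.sdiff_nonempty.2 hMsub)
        (Set.sdiff_nonempty.2 hTsub)
      have hunion_sub := hmax ⟨hMhomog.union hT hMT, hSM.trans Set.subset_union_left,
        hunion_ne_univ⟩ Set.subset_union_left
      exact Set.subset_union_right.trans hunion_sub
    · exact Or.inr (Or.inr (Set.not_nonempty_iff_eq_empty.1 hTM))
  · by_contra hNuniv
    exact hMN.2 (hmax ⟨hN.2.1, hSM.trans hMN.1, hNuniv⟩ hMN.1)

/-- If both `G` and its complement are connected, then every proper
homogeneous set of `G` is included in a quasi-maximal module of `G`. -/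
theorem stmt3 {V : Type*} [Fintype V] (G : SimpleGraph V)
    (hG : G.Connected) (hGc : Gᶜ.Connected)
    (S : Set V) (hS : IsProperHomogSet G S) :
    ∃ M : Set V, IsQuasiMaxModule G M ∧ S ⊆ M := by
  obtain ⟨hShomog, hSnontrivial, hSuniv⟩ := hS
  obtain ⟨M, hSM, hM⟩ := Finite.exists_le_maximal
    (p := fun N => IsHomogSet G N ∧ S ⊆ N ∧ N ≠ Set.univ) ⟨hShomog, subset_rfl, hSuniv⟩
  exact ⟨M, isQuasiMaxModule_of_maximal hG hGc hM (hSnontrivial.nonempty.mono hSM), hSM⟩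
end

section
/- For any graph G with at least two vertices, the quasi-maximal modules of G form a partition of V(G). -/
open SimpleGraph

section Modules

variable {V : Type*} {G : SimpleGraph V}

lemma isHomogSet_singleton (G : SimpleGraph V) (v : V) : IsHomogSet G {v} := by
  intro w _
  by_cases hadj : G.Adj w v
  · exact Or.inl fun s hs => hs ▸ hadj
  · exact Or.inr fun s hs => hs ▸ hadj

lemma isModuleSet_singleton (G : SimpleGraph V) (v : V) : IsModuleSet G {v} := by
  refine ⟨Set.singleton_nonempty v, isHomogSet_singleton G v, fun S _ => ?_⟩
  by_cases hv : v ∈ S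
  · exact Or.inr (Or.inl (Set.singleton_subset_iff.mpr hv))
  · exact Or.inr (Or.inr (Set.inter_singleton_eq_empty.mpr hv))

lemma IsQuasiMaxModule.eq_of_subset {M N : Set V} (hM : IsQuasiMaxModule G M)
    (hN : IsModuleSet G N) (hN_ne : N ≠ Set.univ) (hMN : M ⊆ N) : M = N := by
  by_contra hne
  exact hN_ne (hM.2.2 N hN (hMN.ssubset_of_ne hne))

lemma IsQuasiMaxModule.eq_of_mem {M N : Set V} {v : V} (hM : IsQuasiMaxModule G M)
    (hN : IsQuasiMaxModule G N) (hvM : v ∈ M) (hvN : v ∈ N) : M = N := by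
  rcases hM.1.2.2 N hN.1.2.1 with hNM | hMN | hdisj
  · exact (hN.eq_of_subset hM.1 hM.2.1 hNM).symm
  · exact hM.eq_of_subset hN.1 hN.2.1 hMN
  · exact absurd hdisj (Set.nonempty_iff_ne_empty.mp ⟨v, hvN, hvM⟩)

/-- An inclusion-maximal proper module containing the module `{v}` is quasi-maximal. -/
lemma exists_isQuasiMaxModule_mem [Finite V] [Nontrivial V] (G : SimpleGraph V) (v : V) :
    ∃ M, IsQuasiMaxModule G M ∧ v ∈ M := by
  set T : Set (Set V) := {M | IsModuleSet G M ∧ v ∈ M ∧ M ≠ Set.univ}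
  have hvT : {v} ∈ T := ⟨isModuleSet_singleton G v, rfl, Set.singleton_ne_univ v⟩
  obtain ⟨M, hvM, hMmax⟩ := T.toFinite.exists_le_maximal hvT
  obtain ⟨hM, -, hM_ne⟩ := hMmax.prop
  refine ⟨M, ⟨hM, hM_ne, fun S hS hMS => ?_⟩, hvM rfl⟩
  by_contra hS_ne
  exact hMS.ne (hMmax.eq_of_subset ⟨hS, hMS.subset (hvM rfl), hS_ne⟩ hMS.subset)

end Modules

/-- For any graph `G` with at least two vertices, the quasi-maximal
modules of `G` form a partition of `V(G)`. -/
theorem stmt4 {V : Type*} [Fintype V] (G : SimpleGraph V) (h : 1 < Fintype.card V) :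
    Setoid.IsPartition {M : Set V | IsQuasiMaxModule G M} := by
  have : Nontrivial V := Fintype.one_lt_card_iff_nontrivial.mp h
  refine ⟨fun hM => hM.1.1.ne_empty rfl, fun v => ?_⟩
  obtain ⟨M, hM, hvM⟩ := exists_isQuasiMaxModule_mem G v
  exact ⟨M, ⟨hM, hvM⟩, fun N ⟨hN, hvN⟩ => hN.eq_of_mem hM hvN hvM⟩
end

section
/- In the 5-tuple setup for a (house, bull)-free graph G: for any vertex v ∈ V(G) ∖ (A ∪ B) and any i ∈ {1, …, 5} (indices modulo 5), v is anticomplete to at least one of the four sets A_i, A_{i+1}, A_{i+2}, A_{i+3}. -/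
open SimpleGraph

/-!
Say that `v` touches a set if it has a neighbour there. If `W - X - Y - Z` is a path of sets
(consecutive ones complete, the others anticomplete) and `v` touches `W`, `X` and `Z`, then `v`
is complete to `Y`, or a non-neighbour in `Y` yields a house. Along the 5-tuple this applies to
the paths `A 0 - A 1 - A 2 - A 3` and `A 1 - A 2 - A 3 - A 4` in both directions, and to the paths
through `A 4 - A 0` when these two sets are complete; when they are anticomplete, a bull plays the
same role. The resulting rules show that a vertex touching four consecutive `A k` touches the
fifth, and that a vertex touching all five is complete to `A`, i.e. lies in `A ∪ B`.
-/
section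

variable {V : Type*} {G : SimpleGraph V}

theorem FreeOf.false_of_adj_iff {W : Type*} {F : SimpleGraph W} (hG : FreeOf G F)
    (hF : ∀ a b, (∀ c, F.Adj a c ↔ F.Adj b c) → a = b)
    (f : W → V) (hf : ∀ a b, G.Adj (f a) (f b) ↔ F.Adj a b) : False :=
  hG ⟨⟨f, fun a b hab => hF a b fun c => by rw [← hf, ← hf, hab]⟩, hf⟩

theorem house_eq_of_forall_adj_iff :
    ∀ a b : Fin 5, (∀ c, house.Adj a c ↔ house.Adj b c) → a = b := by
  simp only [house, compl_adj, pathGraph_adj]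
  decide

theorem bull_eq_of_forall_adj_iff :
    ∀ a b : Fin 5, (∀ c, bull.Adj a c ↔ bull.Adj b c) → a = b := by
  intro a b h
  fin_cases a <;> fin_cases b <;> simp [bull] at h ⊢ <;> revert h <;> decide

theorem CompleteTo.symm {S T : Set V} (h : CompleteTo G S T) : CompleteTo G T S :=
  fun t ht s hs => (h s hs t ht).symm

theorem AnticompleteTo.symm {S T : Set V} (h : AnticompleteTo G S T) : AnticompleteTo G T S :=
  fun t ht s hs hts => h s hs t ht hts.symm

theorem not_anticompleteTo_singleton_iff {v : V} {S : Set V} :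
    ¬ AnticompleteTo G {v} S ↔ ∃ x ∈ S, G.Adj v x := by
  simp [AnticompleteTo]

def IsSetPath4 (G : SimpleGraph V) (W X Y Z : Set V) : Prop :=
  CompleteTo G W X ∧ CompleteTo G X Y ∧ CompleteTo G Y Z ∧
    AnticompleteTo G W Y ∧ AnticompleteTo G X Z ∧ AnticompleteTo G W Z

variable {W X Y Z U : Set V} {v : V}

theorem IsSetPath4.reverse (h : IsSetPath4 G W X Y Z) : IsSetPath4 G Z Y X W :=
  let ⟨hWX, hXY, hYZ, hWY, hXZ, hWZ⟩ := h
  ⟨hYZ.symm, hXY.symm, hWX.symm, hXZ.symm, hWY.symm, hWZ.symm⟩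

theorem IsSetPath4.forall_adj_of_houseFree (hG : FreeOf G house) (hP : IsSetPath4 G W X Y Z)
    (hW : ∃ w ∈ W, G.Adj v w) (hX : ∃ x ∈ X, G.Adj v x) (hZ : ∃ z ∈ Z, G.Adj v z) :
    ∀ y ∈ Y, G.Adj v y := by
  obtain ⟨hWX, hXY, hYZ, hWY, hXZ, hWZ⟩ := hP
  obtain ⟨w, hw, hvw⟩ := hW
  obtain ⟨x, hx, hvx⟩ := hX
  obtain ⟨z, hz, hvz⟩ := hZ
  intro y hy
  by_contra hvy
  -- `v, y, w, z, x` would induce the complement of the path `v - y - w - z - x`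
  have := hWX w hw x hx; have := hXY x hx y hy; have := hYZ y hy z hz
  have := hWY w hw y hy; have := hXZ x hx z hz; have := hWZ w hw z hz
  refine hG.false_of_adj_iff house_eq_of_forall_adj_iff ![v, y, w, z, x] fun a b => ?_
  fin_cases a <;> fin_cases b <;> simp_all [house, pathGraph_adj, G.adj_comm]

theorem forall_adj_of_bullFree (hG : FreeOf G bull) (hYZ : CompleteTo G Y Z)
    (hZU : CompleteTo G Z U) (hYU : AnticompleteTo G Y U) (hWY : AnticompleteTo G W Y)
    (hWZ : AnticompleteTo G W Z) (hWU : AnticompleteTo G W U)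
    (hW : ∃ w ∈ W, G.Adj v w) (hY : ∃ y ∈ Y, G.Adj v y) (hZ : ∃ z ∈ Z, G.Adj v z) :
    ∀ u ∈ U, G.Adj v u := by
  obtain ⟨w, hw, hvw⟩ := hW
  obtain ⟨y, hy, hvy⟩ := hY
  obtain ⟨z, hz, hvz⟩ := hZ
  intro u hu
  by_contra hvu
  have := hYZ y hy z hz; have := hZU z hz u hu; have := hYU y hy u hu
  have := hWY w hw y hy; have := hWZ w hw z hz; have := hWU w hw u hu
  -- the triangle `v, y, z` with pendant edges `v w` and `z u` would be an induced bull
  refine hG.false_of_adj_iff bull_eq_of_forall_adj_iff ![w, v, z, u, y] fun a b => ?_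
  fin_cases a <;> fin_cases b <;> simp_all [bull, G.adj_comm]

namespace GoodTuple

variable {A : Fin 5 → Set V} (hA : GoodTuple G A)
include hA

theorem completeTo_succ (j : Fin 5) (hj : j ≠ 4 := by decide) :
    CompleteTo G (A j) (A (j + 1)) :=
  hA.2.2.1 j hj

theorem anticompleteTo_add_two (j : Fin 5) : AnticompleteTo G (A j) (A (j + 2)) :=
  hA.2.2.2.1 j

theorem isSetPath4 (j : Fin 5) (h₀ : CompleteTo G (A j) (A (j + 1)))
    (h₁ : CompleteTo G (A (j + 1)) (A (j + 2))) (h₂ : CompleteTo G (A (j + 2)) (A (j + 3))) :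
    IsSetPath4 G (A j) (A (j + 1)) (A (j + 2)) (A (j + 3)) := by
  have hX := hA.anticompleteTo_add_two (j + 1)
  have hW := hA.anticompleteTo_add_two (j + 3)
  rw [add_assoc] at hX
  rw [add_assoc, show (3 : Fin 5) + 2 = 0 from rfl, add_zero] at hW
  exact ⟨h₀, h₁, h₂, hA.anticompleteTo_add_two j, hX, hW.symm⟩

theorem isSetPath4_zero : IsSetPath4 G (A 0) (A 1) (A 2) (A 3) :=
  hA.isSetPath4 0 (hA.completeTo_succ 0) (hA.completeTo_succ 1) (hA.completeTo_succ 2)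

theorem isSetPath4_one : IsSetPath4 G (A 1) (A 2) (A 3) (A 4) :=
  hA.isSetPath4 1 (hA.completeTo_succ 1) (hA.completeTo_succ 2) (hA.completeTo_succ 3)

theorem exists_adj_of_forall_adj {k : Fin 5} (h : ∀ x ∈ A k, G.Adj v x) :
    ∃ x ∈ A k, G.Adj v x :=
  let ⟨x, hx⟩ := hA.1 k
  ⟨x, hx, h x hx⟩

variable (hHouse : FreeOf G house) (hBull : FreeOf G bull)
include hHouse

theorem forall_adj_two (h₀ : ∃ x ∈ A 0, G.Adj v x) (h₁ : ∃ x ∈ A 1, G.Adj v x)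
    (h₃ : ∃ x ∈ A 3, G.Adj v x) : ∀ x ∈ A 2, G.Adj v x :=
  hA.isSetPath4_zero.forall_adj_of_houseFree hHouse h₀ h₁ h₃

include hBull

theorem forall_adj_one_and_four (h₀ : ∃ x ∈ A 0, G.Adj v x) (h₂ : ∃ x ∈ A 2, G.Adj v x)
    (h₃ : ∃ x ∈ A 3, G.Adj v x) : (∀ x ∈ A 1, G.Adj v x) ∧ ∀ x ∈ A 4, G.Adj v x := by
  refine ⟨hA.isSetPath4_zero.reverse.forall_adj_of_houseFree hHouse h₃ h₂ h₀, ?_⟩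
  rcases hA.2.2.2.2 with h₄₀ | h₄₀
  · have hP := hA.isSetPath4 2 (hA.completeTo_succ 2) (hA.completeTo_succ 3) h₄₀
    exact hP.forall_adj_of_houseFree hHouse h₂ h₃ h₀
  · exact forall_adj_of_bullFree hBull (hA.completeTo_succ 2) (hA.completeTo_succ 3)
      (hA.anticompleteTo_add_two 2) (hA.anticompleteTo_add_two 0)
      (hA.anticompleteTo_add_two 3).symm h₄₀.symm h₀ h₂ h₃

theorem forall_adj_three_and_zero (h₁ : ∃ x ∈ A 1, G.Adj v x) (h₂ : ∃ x ∈ A 2, G.Adj v x)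
    (h₄ : ∃ x ∈ A 4, G.Adj v x) : (∀ x ∈ A 3, G.Adj v x) ∧ ∀ x ∈ A 0, G.Adj v x := by
  refine ⟨hA.isSetPath4_one.forall_adj_of_houseFree hHouse h₁ h₂ h₄, ?_⟩
  rcases hA.2.2.2.2 with h₄₀ | h₄₀
  · have hP := hA.isSetPath4 4 h₄₀ (hA.completeTo_succ 0) (hA.completeTo_succ 1)
    exact hP.reverse.forall_adj_of_houseFree hHouse h₂ h₁ h₄
  · exact forall_adj_of_bullFree hBull (hA.completeTo_succ 1).symm (hA.completeTo_succ 0).symm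
      (hA.anticompleteTo_add_two 0).symm (hA.anticompleteTo_add_two 2).symm
      (hA.anticompleteTo_add_two 4) h₄₀ h₄ h₂ h₁

theorem forall_adj_of_forall_exists_adj (h : ∀ k, ∃ x ∈ A k, G.Adj v x) (k : Fin 5) :
    ∀ x ∈ A k, G.Adj v x := by
  obtain ⟨h₁, h₄⟩ := hA.forall_adj_one_and_four hHouse hBull (h 0) (h 2) (h 3)
  obtain ⟨h₃, h₀⟩ := hA.forall_adj_three_and_zero hHouse hBull (h 1) (h 2) (h 4)
  fin_cases k
  exacts [h₀, h₁, hA.forall_adj_two hHouse (h 0) (h 1) (h 3), h₃, h₄]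

theorem exists_adj_of_four_consecutive (i : Fin 5) (h₀ : ∃ x ∈ A i, G.Adj v x)
    (h₁ : ∃ x ∈ A (i + 1), G.Adj v x) (h₂ : ∃ x ∈ A (i + 2), G.Adj v x)
    (h₃ : ∃ x ∈ A (i + 3), G.Adj v x) (k : Fin 5) : ∃ x ∈ A k, G.Adj v x := by
  have h₄ : ∃ x ∈ A (i + 4), G.Adj v x := by
    apply hA.exists_adj_of_forall_adj
    fin_cases i
    · exact (hA.forall_adj_one_and_four hHouse hBull h₀ h₂ h₃).2
    · exact (hA.forall_adj_three_and_zero hHouse hBull h₀ h₁ h₃).2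
    · exact (hA.forall_adj_one_and_four hHouse hBull h₃ h₀ h₁).1
    · exact hA.forall_adj_two hHouse h₂ h₃ h₀
    · exact (hA.forall_adj_three_and_zero hHouse hBull h₂ h₃ h₀).1
  obtain ⟨m, rfl⟩ : ∃ m, k = i + m := ⟨k - i, by abel⟩
  fin_cases m
  exacts [by simpa using h₀, h₁, h₂, h₃, h₄]

end GoodTuple

end

theorem stmt9_general {V : Type*} (G : SimpleGraph V)
    (hHouse : FreeOf G house) (hBull : FreeOf G bull)
    (A : Fin 5 → Set V) (hA : MaximalGoodTuple G A)
    (v : V) (hv : v ∉ (⋃ i, A i) ∪ Bset G A) (i : Fin 5) :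
    AnticompleteTo G {v} (A i) ∨ AnticompleteTo G {v} (A (i + 1)) ∨
    AnticompleteTo G {v} (A (i + 2)) ∨ AnticompleteTo G {v} (A (i + 3)) := by
  rw [Set.mem_union, not_or] at hv
  by_contra! h
  simp only [not_anticompleteTo_singleton_iff] at h
  obtain ⟨h₀, h₁, h₂, h₃⟩ := h
  have hadj := hA.1.forall_adj_of_forall_exists_adj hHouse hBull
    (hA.1.exists_adj_of_four_consecutive hHouse hBull i h₀ h₁ h₂ h₃)
  exact hv.2 ⟨hv.1, fun a ha => let ⟨k, hk⟩ := Set.mem_iUnion.mp ha; hadj k a hk⟩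

/-- In the 5-tuple setup for a (house, bull)-free graph `G`:
for any vertex `v ∉ A ∪ B` and any `i` (indices modulo 5), `v` is anticomplete
to at least one of the four sets `A i`, `A (i+1)`, `A (i+2)`, `A (i+3)`. -/
theorem stmt9 {V : Type*} [Fintype V] (G : SimpleGraph V)
    (hHouse : FreeOf G house) (hBull : FreeOf G bull)
    (A : Fin 5 → Set V) (hA : MaximalGoodTuple G A)
    (v : V) (hv : v ∉ (⋃ i, A i) ∪ Bset G A) (i : Fin 5) :
    AnticompleteTo G {v} (A i) ∨ AnticompleteTo G {v} (A (i + 1)) ∨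
    AnticompleteTo G {v} (A (i + 2)) ∨ AnticompleteTo G {v} (A (i + 3)) :=
  stmt9_general G hHouse hBull A hA v hv i
end

section
/- In the 5-tuple setup for a (house, bull)-free graph G, if additionally every proper homogeneous set of G is a stable set, then no triangle of G has two of its vertices in A. -/
open SimpleGraph

section Work
variable {V : Type*} {G : SimpleGraph V} {A : Fin 5 → Set V}

variable {V : Type*} {G : SimpleGraph V}

private lemma bull_adj_dec (a b : Fin 5) :
    bull.Adj a b ↔ (s(a,b) = s(0,1) ∨ s(a,b) = s(1,2) ∨ s(a,b) = s(2,3) ∨ s(a,b) = s(1,4)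
      ∨ s(a,b) = s(2,4)) ∧ a ≠ b := by
  rw [bull, SimpleGraph.fromEdgeSet_adj]
  simp [Set.mem_insert_iff]

/-- Two private pendants on a triangle give a bull or a house. -/
lemma toolT (hHouse : FreeOf G house) (hBull : FreeOf G bull)
    {t1 t2 t3 p q : V}
    (h12 : G.Adj t1 t2) (h23 : G.Adj t2 t3) (h13 : G.Adj t1 t3)
    (hp1 : G.Adj p t1) (hp2 : ¬ G.Adj p t2) (hp3 : ¬ G.Adj p t3)
    (hq2 : G.Adj q t2) (hq1 : ¬ G.Adj q t1) (hq3 : ¬ G.Adj q t3) : False := by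
  have np1 : p ≠ t1 := fun h => G.irrefl (h ▸ hp1)
  have np2 : p ≠ t2 := fun h => hp3 (h ▸ h23)
  have np3 : p ≠ t3 := fun h => hp2 (h ▸ h23.symm)
  have nq2 : q ≠ t2 := fun h => G.irrefl (h ▸ hq2)
  have nq1 : q ≠ t1 := fun h => hq3 (h ▸ h13)
  have nq3 : q ≠ t3 := fun h => hq1 (h ▸ h13.symm)
  have npq : p ≠ q := fun h => hq1 (h ▸ hp1)
  have s12 := h12.symm; have s23 := h23.symm; have s13 := h13.symm
  have sp1 := hp1.symm; have sq2 := hq2.symm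
  have sp2 : ¬ G.Adj t2 p := fun h => hp2 h.symm
  have sp3 : ¬ G.Adj t3 p := fun h => hp3 h.symm
  have sq1 : ¬ G.Adj t1 q := fun h => hq1 h.symm
  have sq3 : ¬ G.Adj t3 q := fun h => hq3 h.symm
  have i1 : ¬ G.Adj t1 t1 := G.irrefl
  have i2 : ¬ G.Adj t2 t2 := G.irrefl
  have i3 : ¬ G.Adj t3 t3 := G.irrefl
  have ip : ¬ G.Adj p p := G.irrefl
  have iq : ¬ G.Adj q q := G.irrefl
  by_cases hpq : G.Adj p q
  · have spq := hpq.symm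
    apply hHouse
    refine ⟨⟨![t1, q, t3, p, t2], ?_⟩, ?_⟩
    · intro a b hab
      fin_cases a <;> fin_cases b <;> simp_all
    · intro a b
      fin_cases a <;> fin_cases b <;>
        first
        | exact iff_of_true (by assumption)
            (by simp only [house, SimpleGraph.compl_adj, SimpleGraph.pathGraph_adj]; decide)
        | exact iff_of_false (by assumption)
            (by simp only [house, SimpleGraph.compl_adj, SimpleGraph.pathGraph_adj]; decide)
  · have spq : ¬ G.Adj q p := fun h => hpq h.symm
    apply hBull
    refine ⟨⟨![p, t1, t2, q, t3], ?_⟩, ?_⟩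
    · intro a b hab
      fin_cases a <;> fin_cases b <;> simp_all
    · intro a b
      fin_cases a <;> fin_cases b <;>
        first
        | exact iff_of_true (by assumption) (by rw [bull_adj_dec]; decide)
        | exact iff_of_false (by assumption) (by rw [bull_adj_dec]; decide)

variable {V : Type*} {G : SimpleGraph V}

/-- C5 case: a vertex mixed on an edge of "type 0" vertices has type 0. -/
lemma mixedC (hH : FreeOf G house) (hB : FreeOf G bull) {S1 S2 S3 S4 : Set V}
    (c12 : ∀ c ∈ S1, ∀ d ∈ S2, G.Adj c d)
    (c34 : ∀ e ∈ S3, ∀ f ∈ S4, G.Adj e f)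
    (a13 : ∀ c ∈ S1, ∀ e ∈ S3, ¬ G.Adj c e)
    (a14 : ∀ c ∈ S1, ∀ f ∈ S4, ¬ G.Adj c f)
    (a24 : ∀ d ∈ S2, ∀ f ∈ S4, ¬ G.Adj d f)
    (h1 : S1.Nonempty) (h2 : S2.Nonempty) (h3 : S3.Nonempty) (h4 : S4.Nonempty)
    {a b x : V}
    (ha1 : ∀ c ∈ S1, G.Adj a c) (ha4 : ∀ f ∈ S4, G.Adj a f)
    (ha2 : ∀ d ∈ S2, ¬ G.Adj a d) (ha3 : ∀ e ∈ S3, ¬ G.Adj a e)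
    (hb1 : ∀ c ∈ S1, G.Adj b c) (hb4 : ∀ f ∈ S4, G.Adj b f)
    (hb2 : ∀ d ∈ S2, ¬ G.Adj b d) (hb3 : ∀ e ∈ S3, ¬ G.Adj b e)
    (hab : G.Adj a b) (hxa : G.Adj x a) (hxb : ¬ G.Adj x b) :
    (∀ c ∈ S1, G.Adj x c) ∧ (∀ f ∈ S4, G.Adj x f) ∧ (∀ d ∈ S2, ¬ G.Adj x d)
      ∧ (∀ e ∈ S3, ¬ G.Adj x e) := by
  obtain ⟨c0, hc0⟩ := h1; obtain ⟨d0, hd0⟩ := h2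
  obtain ⟨e0, he0⟩ := h3; obtain ⟨f0, hf0⟩ := h4
  have x1 : ∀ c ∈ S1, G.Adj x c := by
    intro c hc; by_contra hxc
    exact toolT hH hB (ha1 c hc) (hb1 c hc).symm hab hxa hxc hxb
      (c12 c hc d0 hd0).symm (fun h => ha2 d0 hd0 h.symm) (fun h => hb2 d0 hd0 h.symm)
  have x4 : ∀ f ∈ S4, G.Adj x f := by
    intro f hf; by_contra hxf
    exact toolT hH hB (ha4 f hf) (hb4 f hf).symm hab hxa hxf hxb
      (c34 e0 he0 f hf) (fun h => ha3 e0 he0 h.symm) (fun h => hb3 e0 he0 h.symm)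
  have x2 : ∀ d ∈ S2, ¬ G.Adj x d := by
    intro d hd hxd
    exact toolT hH hB (x1 c0 hc0).symm hxd (c12 c0 hc0 d hd)
      (hb1 c0 hc0) (fun h => hxb h.symm) (hb2 d hd)
      (x4 f0 hf0).symm (fun h => a14 c0 hc0 f0 hf0 h.symm) (fun h => a24 d hd f0 hf0 h.symm)
  have x3 : ∀ e ∈ S3, ¬ G.Adj x e := by
    intro e he hxe
    exact toolT hH hB (x4 f0 hf0).symm hxe (c34 e he f0 hf0).symm
      (hb4 f0 hf0) (fun h => hxb h.symm) (hb3 e he)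
      (x1 c0 hc0).symm (a14 c0 hc0 f0 hf0) (a13 c0 hc0 e he)
  exact ⟨x1, x4, x2, x3⟩

/-- P5 case, type 0 (end of path). -/
lemma mixedP0 (hH : FreeOf G house) (hB : FreeOf G bull) {S1 S2 S3 S4 : Set V}
    (c12 : ∀ c ∈ S1, ∀ d ∈ S2, G.Adj c d)
    (c23 : ∀ d ∈ S2, ∀ e ∈ S3, G.Adj d e)
    (c34 : ∀ e ∈ S3, ∀ f ∈ S4, G.Adj e f)
    (a13 : ∀ c ∈ S1, ∀ e ∈ S3, ¬ G.Adj c e)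
    (a14 : ∀ c ∈ S1, ∀ f ∈ S4, ¬ G.Adj c f)
    (a24 : ∀ d ∈ S2, ∀ f ∈ S4, ¬ G.Adj d f)
    (h1 : S1.Nonempty) (h2 : S2.Nonempty) (h3 : S3.Nonempty) (h4 : S4.Nonempty)
    {a b x : V}
    (ha1 : ∀ c ∈ S1, G.Adj a c) (ha2 : ∀ d ∈ S2, ¬ G.Adj a d)
    (ha3 : ∀ e ∈ S3, ¬ G.Adj a e) (ha4 : ∀ f ∈ S4, ¬ G.Adj a f)
    (hb1 : ∀ c ∈ S1, G.Adj b c) (hb2 : ∀ d ∈ S2, ¬ G.Adj b d)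
    (hb3 : ∀ e ∈ S3, ¬ G.Adj b e) (hb4 : ∀ f ∈ S4, ¬ G.Adj b f)
    (hab : G.Adj a b) (hxa : G.Adj x a) (hxb : ¬ G.Adj x b) :
    (∀ c ∈ S1, G.Adj x c) ∧ (∀ d ∈ S2, ¬ G.Adj x d) ∧ (∀ e ∈ S3, ¬ G.Adj x e)
      ∧ (∀ f ∈ S4, ¬ G.Adj x f) := by
  obtain ⟨c0, hc0⟩ := h1; obtain ⟨d0, hd0⟩ := h2
  obtain ⟨e0, he0⟩ := h3; obtain ⟨f0, hf0⟩ := h4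
  have x1 : ∀ c ∈ S1, G.Adj x c := by
    intro c hc; by_contra hxc
    exact toolT hH hB (ha1 c hc) (hb1 c hc).symm hab hxa hxc hxb
      (c12 c hc d0 hd0).symm (fun h => ha2 d0 hd0 h.symm) (fun h => hb2 d0 hd0 h.symm)
  have x2 : ∀ d ∈ S2, ¬ G.Adj x d := by
    intro d hd hxd
    have h2a : ∀ e ∈ S3, G.Adj x e := by
      intro e he; by_contra hxe
      exact toolT hH hB (c12 c0 hc0 d hd) hxd.symm (x1 c0 hc0).symm
        (hb1 c0 hc0) (fun h => hb2 d hd h) (fun h => hxb h.symm)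
        (c23 d hd e he).symm (fun h => a13 c0 hc0 e he h.symm) (fun h => hxe h.symm)
    have h2b : ∀ f ∈ S4, G.Adj x f := by
      intro f hf; by_contra hxf
      exact toolT hH hB (h2a e0 he0) (c23 d hd e0 he0).symm hxd
        hxa.symm (ha3 e0 he0) (ha2 d hd)
        (c34 e0 he0 f hf).symm (fun h => hxf h.symm) (fun h => a24 d hd f hf h.symm)
    exact toolT hH hB (x1 c0 hc0).symm hxd (c12 c0 hc0 d hd)
      (hb1 c0 hc0) (fun h => hxb h.symm) (hb2 d hd)
      (h2b f0 hf0).symm (fun h => a14 c0 hc0 f0 hf0 h.symm) (fun h => a24 d hd f0 hf0 h.symm)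
  have x3 : ∀ e ∈ S3, ¬ G.Adj x e := by
    intro e he hxe
    exact toolT hH hB (x1 c0 hc0).symm hxa (ha1 c0 hc0).symm
      (c12 c0 hc0 d0 hd0).symm (fun h => x2 d0 hd0 h.symm) (fun h => ha2 d0 hd0 h.symm)
      hxe.symm (fun h => a13 c0 hc0 e he h.symm) (fun h => ha3 e he h.symm)
  have x4 : ∀ f ∈ S4, ¬ G.Adj x f := by
    intro f hf hxf
    exact toolT hH hB (x1 c0 hc0).symm hxa (ha1 c0 hc0).symm
      (c12 c0 hc0 d0 hd0).symm (fun h => x2 d0 hd0 h.symm) (fun h => ha2 d0 hd0 h.symm)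
      hxf.symm (fun h => a14 c0 hc0 f hf h.symm) (fun h => ha4 f hf h.symm)
  exact ⟨x1, x2, x3, x4⟩

/-- P5 case, type 1. -/
lemma mixedP1 (hH : FreeOf G house) (hB : FreeOf G bull) {S0 S2 S3 S4 : Set V}
    (c23 : ∀ d ∈ S2, ∀ e ∈ S3, G.Adj d e)
    (c34 : ∀ e ∈ S3, ∀ f ∈ S4, G.Adj e f)
    (a02 : ∀ z ∈ S0, ∀ d ∈ S2, ¬ G.Adj z d)
    (a03 : ∀ z ∈ S0, ∀ e ∈ S3, ¬ G.Adj z e)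
    (a24 : ∀ d ∈ S2, ∀ f ∈ S4, ¬ G.Adj d f)
    (h0 : S0.Nonempty) (h2 : S2.Nonempty) (h3 : S3.Nonempty) (h4 : S4.Nonempty)
    {a b x : V}
    (ha0 : ∀ z ∈ S0, G.Adj a z) (ha2 : ∀ d ∈ S2, G.Adj a d)
    (ha3 : ∀ e ∈ S3, ¬ G.Adj a e) (ha4 : ∀ f ∈ S4, ¬ G.Adj a f)
    (hb0 : ∀ z ∈ S0, G.Adj b z) (hb2 : ∀ d ∈ S2, G.Adj b d)
    (hb3 : ∀ e ∈ S3, ¬ G.Adj b e) (hb4 : ∀ f ∈ S4, ¬ G.Adj b f)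
    (hab : G.Adj a b) (hxa : G.Adj x a) (hxb : ¬ G.Adj x b) :
    (∀ z ∈ S0, G.Adj x z) ∧ (∀ d ∈ S2, G.Adj x d) ∧ (∀ e ∈ S3, ¬ G.Adj x e)
      ∧ (∀ f ∈ S4, ¬ G.Adj x f) := by
  obtain ⟨z0, hz0⟩ := h0; obtain ⟨d0, hd0⟩ := h2
  obtain ⟨e0, he0⟩ := h3; obtain ⟨f0, hf0⟩ := h4
  have x2 : ∀ d ∈ S2, G.Adj x d := by
    intro d hd; by_contra hxd
    exact toolT hH hB (ha2 d hd) (hb2 d hd).symm hab hxa hxd hxb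
      (c23 d hd e0 he0).symm (fun h => ha3 e0 he0 h.symm) (fun h => hb3 e0 he0 h.symm)
  have x3 : ∀ e ∈ S3, ¬ G.Adj x e := by
    intro e he hxe
    by_cases hx0 : G.Adj x z0
    · exact toolT hH hB (x2 d0 hd0).symm hxe (c23 d0 hd0 e he)
        (hb2 d0 hd0) (fun h => hxb h.symm) (hb3 e he)
        hx0.symm (a02 z0 hz0 d0 hd0) (a03 z0 hz0 e he)
    · by_cases hx4 : G.Adj x f0
      · exact toolT hH hB hxa.symm (x2 d0 hd0) (ha2 d0 hd0)
          (ha0 z0 hz0).symm (fun h => hx0 h.symm) (a02 z0 hz0 d0 hd0)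
          hx4.symm (fun h => ha4 f0 hf0 h.symm) (fun h => a24 d0 hd0 f0 hf0 h.symm)
      · exact toolT hH hB (c23 d0 hd0 e he) hxe.symm (x2 d0 hd0).symm
          (hb2 d0 hd0) (hb3 e he) (fun h => hxb h.symm)
          (c34 e he f0 hf0).symm (fun h => a24 d0 hd0 f0 hf0 h.symm) (fun h => hx4 h.symm)
  have x4 : ∀ f ∈ S4, ¬ G.Adj x f := by
    intro f hf hxf
    exact toolT hH hB (x2 d0 hd0).symm hxa (ha2 d0 hd0).symm
      (c23 d0 hd0 e0 he0).symm (fun h => x3 e0 he0 h.symm) (fun h => ha3 e0 he0 h.symm)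
      hxf.symm (fun h => a24 d0 hd0 f hf h.symm) (fun h => ha4 f hf h.symm)
  have x0 : ∀ z ∈ S0, G.Adj x z := by
    intro z hz; by_contra hx0
    exact toolT hH hB (ha2 d0 hd0) (x2 d0 hd0).symm hxa.symm
      (ha0 z hz).symm (a02 z hz d0 hd0) (fun h => hx0 h.symm)
      (c23 d0 hd0 e0 he0).symm (fun h => ha3 e0 he0 h.symm) (fun h => x3 e0 he0 h.symm)
  exact ⟨x0, x2, x3, x4⟩

/-- P5 case, type 2 (middle). -/
lemma mixedP2 (hH : FreeOf G house) (hB : FreeOf G bull) {S0 S1 S3 S4 : Set V}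
    (c01 : ∀ z ∈ S0, ∀ c ∈ S1, G.Adj z c)
    (c34 : ∀ e ∈ S3, ∀ f ∈ S4, G.Adj e f)
    (a03 : ∀ z ∈ S0, ∀ e ∈ S3, ¬ G.Adj z e)
    (a04 : ∀ z ∈ S0, ∀ f ∈ S4, ¬ G.Adj z f)
    (a13 : ∀ c ∈ S1, ∀ e ∈ S3, ¬ G.Adj c e)
    (a14 : ∀ c ∈ S1, ∀ f ∈ S4, ¬ G.Adj c f)
    (h0 : S0.Nonempty) (h1 : S1.Nonempty) (h3 : S3.Nonempty) (h4 : S4.Nonempty)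
    {a b x : V}
    (ha1 : ∀ c ∈ S1, G.Adj a c) (ha3 : ∀ e ∈ S3, G.Adj a e)
    (ha0 : ∀ z ∈ S0, ¬ G.Adj a z) (ha4 : ∀ f ∈ S4, ¬ G.Adj a f)
    (hb1 : ∀ c ∈ S1, G.Adj b c) (hb3 : ∀ e ∈ S3, G.Adj b e)
    (hb0 : ∀ z ∈ S0, ¬ G.Adj b z) (hb4 : ∀ f ∈ S4, ¬ G.Adj b f)
    (hab : G.Adj a b) (hxa : G.Adj x a) (hxb : ¬ G.Adj x b) :
    (∀ c ∈ S1, G.Adj x c) ∧ (∀ e ∈ S3, G.Adj x e) ∧ (∀ z ∈ S0, ¬ G.Adj x z)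
      ∧ (∀ f ∈ S4, ¬ G.Adj x f) := by
  obtain ⟨z0, hz0⟩ := h0; obtain ⟨c0, hc0⟩ := h1
  obtain ⟨e0, he0⟩ := h3; obtain ⟨f0, hf0⟩ := h4
  have x3 : ∀ e ∈ S3, G.Adj x e := by
    intro e he; by_contra hxe
    exact toolT hH hB (ha3 e he) (hb3 e he).symm hab hxa hxe hxb
      (c34 e he f0 hf0).symm (fun h => ha4 f0 hf0 h.symm) (fun h => hb4 f0 hf0 h.symm)
  have x1 : ∀ c ∈ S1, G.Adj x c := by
    intro c hc; by_contra hxc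
    exact toolT hH hB (ha1 c hc) (hb1 c hc).symm hab hxa hxc hxb
      (c01 z0 hz0 c hc) (fun h => ha0 z0 hz0 h.symm) (fun h => hb0 z0 hz0 h.symm)
  have x4 : ∀ f ∈ S4, ¬ G.Adj x f := by
    intro f hf hxf
    exact toolT hH hB (x3 e0 he0).symm hxf (c34 e0 he0 f hf)
      (hb3 e0 he0) (fun h => hxb h.symm) (hb4 f hf)
      (x1 c0 hc0).symm (a13 c0 hc0 e0 he0) (a14 c0 hc0 f hf)
  have x0 : ∀ z ∈ S0, ¬ G.Adj x z := by
    intro z hz hx0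
    exact toolT hH hB (x1 c0 hc0).symm hx0 (c01 z hz c0 hc0).symm
      (hb1 c0 hc0) (fun h => hxb h.symm) (hb0 z hz)
      (x3 e0 he0).symm (fun h => a13 c0 hc0 e0 he0 h.symm) (fun h => a03 z hz e0 he0 h.symm)
  exact ⟨x1, x3, x0, x4⟩

variable {V : Type*} {G : SimpleGraph V}

lemma homogCore (hhom : ∀ S : Set V, IsProperHomogSet G S → IsStableSet G S)
    {R : Set V} {a b : V}
    (haR : a ∈ R) (hbR : b ∈ R) (hab : G.Adj a b)
    (hM : ∀ y z x : V, y ∈ R → z ∈ R → G.Adj y z → G.Adj x y → ¬ G.Adj x z → x ∈ R)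
    (hc : ∃ c, c ∉ R) : False := by
  classical
  set step : V → V → Prop := fun y z => y ∈ R ∧ z ∈ R ∧ G.Adj y z with hstepdef
  set K : Set V := {y | Relation.ReflTransGen step a y} with hKdef
  have hKsub : ∀ y ∈ K, y ∈ R := by
    intro y hy
    induction hy with
    | refl => exact haR
    | tail _ h _ => exact h.2.1
  have haK : a ∈ K := Relation.ReflTransGen.refl
  have hbK : b ∈ K := Relation.ReflTransGen.single ⟨haR, hbR, hab⟩
  have uniform : ∀ x, x ∉ R → ∀ y ∈ K, (G.Adj x y ↔ G.Adj x a) := by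
    intro x hxR y hy
    induction hy with
    | refl => exact Iff.rfl
    | tail _ h ih =>
        rename_i y' z' _
        have key : G.Adj x z' ↔ G.Adj x y' := by
          constructor
          · intro hz; by_contra hy'
            exact hxR (hM z' y' x h.2.1 h.1 h.2.2.symm hz hy')
          · intro hy'; by_contra hz
            exact hxR (hM y' z' x h.1 h.2.1 h.2.2 hy' hz)
        exact key.trans ih
  have homog : IsHomogSet G K := by
    intro x hxK
    by_cases hxR : x ∈ R
    · right; intro s hs hadj
      exact hxK (Relation.ReflTransGen.tail hs ⟨hKsub s hs, hxR, hadj.symm⟩)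
    · by_cases hxa : G.Adj x a
      · left; intro s hs; exact (uniform x hxR s hs).mpr hxa
      · right; intro s hs h; exact hxa ((uniform x hxR s hs).mp h)
  obtain ⟨c, hcR⟩ := hc
  have hKne : K ≠ Set.univ := by
    intro h
    exact hcR (hKsub c (by rw [h]; trivial))
  have hstable := hhom K ⟨homog, ⟨a, haK, b, hbK, hab.ne⟩, hKne⟩
  exact hstable haK hbK hab.ne hab

variable {V : Type*} {G : SimpleGraph V} {A : Fin 5 → Set V}

/-- If `x ∉ ⋃ A` behaves exactly like the vertices of `A t` towards all parts,
then `A` was not maximal. -/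
lemma addable (hA : MaximalGoodTuple G A) (t : Fin 5) {x : V} (hx : x ∉ ⋃ i, A i)
    (Hc : ∀ j, j ≠ t → (∀ a ∈ A t, ∀ b ∈ A j, G.Adj a b) → ∀ c ∈ A j, G.Adj x c)
    (Ha : ∀ j, j ≠ t → (∀ a ∈ A t, ∀ b ∈ A j, ¬ G.Adj a b) → ∀ c ∈ A j, ¬ G.Adj x c) :
    False := by
  classical
  set A' : Fin 5 → Set V := Function.update A t (insert x (A t)) with hA'def
  have upd : ∀ j, A' j = if j = t then insert x (A t) else A j := by
    intro j; simp [hA'def, Function.update_apply]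
  have updt : A' t = insert x (A t) := by rw [upd]; simp
  have updo : ∀ j, j ≠ t → A' j = A j := by intro j hj; rw [upd]; simp [hj]
  have hgood := hA.1
  have hxj : ∀ j, x ∉ A j := fun j hj => hx (Set.mem_iUnion.mpr ⟨j, hj⟩)
  have hcompsymm : ∀ {S T : Set V}, (∀ a ∈ S, ∀ b ∈ T, G.Adj a b) →
      (∀ a ∈ T, ∀ b ∈ S, G.Adj a b) := fun h a ha b hb => (h b hb a ha).symm
  have hantisymm : ∀ {S T : Set V}, (∀ a ∈ S, ∀ b ∈ T, ¬ G.Adj a b) →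
      (∀ a ∈ T, ∀ b ∈ S, ¬ G.Adj a b) := fun h a ha b hb hadj => h b hb a ha hadj.symm
  -- generic: complete between A' i and A' j given complete between A i and A j
  have compgen : ∀ i j : Fin 5, i ≠ j → (∀ a ∈ A i, ∀ b ∈ A j, G.Adj a b) →
      ∀ a ∈ A' i, ∀ b ∈ A' j, G.Adj a b := by
    intro i j hij hc a ha b hb
    rw [upd] at ha hb
    by_cases hit : i = t
    · rw [if_pos hit] at ha
      have hjt : ¬ (j = t) := fun h => hij (hit.trans h.symm)
      rw [if_neg hjt] at hb
      rcases Set.mem_insert_iff.mp ha with h1 | h1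
      · subst h1; exact Hc j (fun h => hij (hit.trans h.symm)) (hit ▸ hc) b hb
      · exact hc a (hit ▸ h1) b hb
    · rw [if_neg hit] at ha
      by_cases hjt : j = t
      · rw [if_pos hjt] at hb
        rcases Set.mem_insert_iff.mp hb with h1 | h1
        · subst h1; exact (Hc i (fun h => hij (h.trans hjt.symm)) (hjt ▸ hcompsymm hc) a ha).symm
        · exact hc a ha b (hjt ▸ h1)
      · rw [if_neg hjt] at hb; exact hc a ha b hb
  have antigen : ∀ i j : Fin 5, i ≠ j → (∀ a ∈ A i, ∀ b ∈ A j, ¬ G.Adj a b) →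
      ∀ a ∈ A' i, ∀ b ∈ A' j, ¬ G.Adj a b := by
    intro i j hij hc a ha b hb
    rw [upd] at ha hb
    by_cases hit : i = t
    · rw [if_pos hit] at ha
      have hjt : ¬ (j = t) := fun h => hij (hit.trans h.symm)
      rw [if_neg hjt] at hb
      rcases Set.mem_insert_iff.mp ha with h1 | h1
      · subst h1; exact Ha j (fun h => hij (hit.trans h.symm)) (hit ▸ hc) b hb
      · exact hc a (hit ▸ h1) b hb
    · rw [if_neg hit] at ha
      by_cases hjt : j = t
      · rw [if_pos hjt] at hb
        rcases Set.mem_insert_iff.mp hb with h1 | h1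
        · subst h1; intro hadj; exact (Ha i (fun h => hij (h.trans hjt.symm)) (hjt ▸ hantisymm hc) a ha) hadj.symm
        · exact hc a ha b (hjt ▸ h1)
      · rw [if_neg hjt] at hb; exact hc a ha b hb
  have hgood' : GoodTuple G A' := by
    refine ⟨?_, ?_, ?_, ?_, ?_⟩
    · intro i
      rw [upd]
      split_ifs
      · exact ⟨x, Set.mem_insert _ _⟩
      · exact hgood.1 i
    · intro i j hij
      rw [Set.disjoint_left]
      intro a ha haj
      rw [upd] at ha haj
      by_cases hit : i = t
      · rw [if_pos hit] at ha
        have hjt : ¬ (j = t) := fun h => hij (hit.trans h.symm)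
        rw [if_neg hjt] at haj
        rcases Set.mem_insert_iff.mp ha with h1 | h1
        · exact hxj j (h1 ▸ haj)
        · exact Set.disjoint_left.mp (hgood.2.1 (hit ▸ hij : (t:Fin 5) ≠ j)) h1 haj
      · rw [if_neg hit] at ha
        by_cases hjt : j = t
        · rw [if_pos hjt] at haj
          rcases Set.mem_insert_iff.mp haj with h1 | h1
          · exact hxj i (h1 ▸ ha)
          · exact Set.disjoint_left.mp (hgood.2.1 hij) ha (hjt ▸ h1)
        · rw [if_neg hjt] at haj
          exact Set.disjoint_left.mp (hgood.2.1 hij) ha haj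
    · intro i hi
      have hne : i ≠ i + 1 := by
        intro h; exact absurd (congrArg Fin.val h) (by omega)
      exact compgen i (i+1) hne (hgood.2.2.1 i hi)
    · intro i
      have hne : i ≠ i + 2 := by
        intro h
        have := congrArg Fin.val h
        simp [Fin.val_add] at this
        omega
      exact antigen i (i+2) hne (hgood.2.2.2.1 i)
    · rcases hgood.2.2.2.2 with h | h
      · exact Or.inl (compgen 4 0 (by decide) h)
      · exact Or.inr (antigen 4 0 (by decide) h)
  have hsub : (⋃ i, A i) ⊆ ⋃ i, A' i := by
    refine Set.iUnion_mono fun j => ?_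
    rw [upd]; split_ifs with h
    · subst h; exact Set.subset_insert _ _
    · exact subset_rfl
  have hxin : x ∈ ⋃ i, A' i := Set.mem_iUnion.mpr ⟨t, by rw [updt]; exact Set.mem_insert _ _⟩
  exact hA.2 A' hgood' ⟨hsub, fun hsup => hx (hsup hxin)⟩

variable {V : Type*} {G : SimpleGraph V}

/-- P5 case, common neighbour of an edge between `S0` and `S1` (path end). -/
lemma mainP01 (hH : FreeOf G house) (hB : FreeOf G bull) {S0 S1 S2 S3 S4 : Set V}
    (c01 : ∀ a ∈ S0, ∀ b ∈ S1, G.Adj a b) (c12 : ∀ a ∈ S1, ∀ b ∈ S2, G.Adj a b)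
    (c23 : ∀ a ∈ S2, ∀ b ∈ S3, G.Adj a b) (c34 : ∀ a ∈ S3, ∀ b ∈ S4, G.Adj a b)
    (a02 : ∀ a ∈ S0, ∀ b ∈ S2, ¬ G.Adj a b) (a03 : ∀ a ∈ S0, ∀ b ∈ S3, ¬ G.Adj a b)
    (a04 : ∀ a ∈ S0, ∀ b ∈ S4, ¬ G.Adj a b) (a13 : ∀ a ∈ S1, ∀ b ∈ S3, ¬ G.Adj a b)
    (a14 : ∀ a ∈ S1, ∀ b ∈ S4, ¬ G.Adj a b) (a24 : ∀ a ∈ S2, ∀ b ∈ S4, ¬ G.Adj a b)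
    (n2 : S2.Nonempty) (n3 : S3.Nonempty) (n4 : S4.Nonempty)
    (st0 : ∀ a ∈ S0, ∀ b ∈ S0, ¬ G.Adj a b) (st1 : ∀ a ∈ S1, ∀ b ∈ S1, ¬ G.Adj a b)
    (st2 : ∀ a ∈ S2, ∀ b ∈ S2, ¬ G.Adj a b)
    {x u v : V} (hu : u ∈ S0) (hv : v ∈ S1) (hxu : G.Adj x u) (hxv : G.Adj x v)
    (add0 : (∀ c ∈ S1, G.Adj x c) → (∀ c ∈ S2, ¬ G.Adj x c) → (∀ c ∈ S3, ¬ G.Adj x c) →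
      (∀ c ∈ S4, ¬ G.Adj x c) → False)
    (add1 : (∀ c ∈ S0, G.Adj x c) → (∀ c ∈ S2, G.Adj x c) → (∀ c ∈ S3, ¬ G.Adj x c) →
      (∀ c ∈ S4, ¬ G.Adj x c) → False) :
    (∀ c ∈ S0, G.Adj x c) ∧ (∀ c ∈ S1, G.Adj x c) ∧ (∀ c ∈ S2, G.Adj x c) ∧
      (∀ c ∈ S3, G.Adj x c) ∧ (∀ c ∈ S4, G.Adj x c) := by
  have huv : G.Adj u v := c01 u hu v hv
  have d1 : ∀ c3 ∈ S3, G.Adj x c3 → ∀ c2 ∈ S2, G.Adj x c2 := by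
    intro c3 hc3 h3 c2 hc2; by_contra h2
    exact toolT hH hB hxv.symm hxu huv.symm
      (c12 v hv c2 hc2).symm (fun h => h2 h.symm) (fun h => a02 u hu c2 hc2 h.symm)
      h3.symm (fun h => a13 v hv c3 hc3 h.symm) (fun h => a03 u hu c3 hc3 h.symm)
  by_cases h3e : ∃ c3 ∈ S3, G.Adj x c3
  · obtain ⟨c3s, hc3s, hadj3⟩ := h3e
    have hS2 : ∀ c2 ∈ S2, G.Adj x c2 := d1 c3s hc3s hadj3
    obtain ⟨c2r, hc2r⟩ := n2
    have hS4 : ∀ c4 ∈ S4, G.Adj x c4 := by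
      intro c4 hc4; by_contra h4
      exact toolT hH hB hadj3 (c23 c2r hc2r c3s hc3s).symm (hS2 c2r hc2r)
        hxu.symm (a03 u hu c3s hc3s) (a02 u hu c2r hc2r)
        (c34 c3s hc3s c4 hc4).symm (fun h => h4 h.symm) (fun h => a24 c2r hc2r c4 hc4 h.symm)
    obtain ⟨c4r, hc4r⟩ := n4
    have hS3 : ∀ c3 ∈ S3, G.Adj x c3 := by
      intro c3 hc3; by_contra h3
      exact toolT hH hB (hS2 c2r hc2r).symm hxv (c12 v hv c2r hc2r).symm
        (c23 c2r hc2r c3 hc3).symm (fun h => h3 h.symm) (fun h => a13 v hv c3 hc3 h.symm)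
        (hS4 c4r hc4r).symm (fun h => a24 c2r hc2r c4r hc4r h.symm)
        (fun h => a14 v hv c4r hc4r h.symm)
    have hS0 : ∀ u' ∈ S0, G.Adj x u' := by
      intro u' hu'; by_contra h0
      exact toolT hH hB hxv.symm hxu huv.symm
        (c01 u' hu' v hv) (fun h => h0 h.symm) (st0 u' hu' u hu)
        hadj3.symm (fun h => a13 v hv c3s hc3s h.symm) (fun h => a03 u hu c3s hc3s h.symm)
    have hS1 : ∀ v' ∈ S1, G.Adj x v' := by
      intro v' hv'; by_contra h1
      exact toolT hH hB hxu.symm hxv huv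
        (c01 u hu v' hv').symm (fun h => h1 h.symm) (st1 v' hv' v hv)
        hadj3.symm (fun h => a03 u hu c3s hc3s h.symm) (fun h => a13 v hv c3s hc3s h.symm)
    exact ⟨hS0, hS1, hS2, hS3, hS4⟩
  · push_neg at h3e
    by_cases h2e : ∃ c2 ∈ S2, G.Adj x c2
    · obtain ⟨c2s, hc2s, hadj2⟩ := h2e
      obtain ⟨c3r, hc3r⟩ := n3
      have hS4n : ∀ c4 ∈ S4, ¬ G.Adj x c4 := by
        intro c4 hc4 h4
        exact toolT hH hB hadj2.symm hxv (c12 v hv c2s hc2s).symm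
          (c23 c2s hc2s c3r hc3r).symm (fun h => h3e c3r hc3r h.symm)
          (fun h => a13 v hv c3r hc3r h.symm)
          h4.symm (fun h => a24 c2s hc2s c4 hc4 h.symm) (fun h => a14 v hv c4 hc4 h.symm)
      have hS0 : ∀ u' ∈ S0, G.Adj x u' := by
        intro u' hu'; by_contra h0
        exact toolT hH hB (c12 v hv c2s hc2s) hadj2.symm hxv.symm
          (c01 u' hu' v hv) (a02 u' hu' c2s hc2s) (fun h => h0 h.symm)
          (c23 c2s hc2s c3r hc3r).symm (fun h => a13 v hv c3r hc3r h.symm)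
          (fun h => h3e c3r hc3r h.symm)
      have hS2 : ∀ c2' ∈ S2, G.Adj x c2' := by
        intro c2' hc2'; by_contra h2'
        exact toolT hH hB (c12 v hv c2s hc2s) hadj2.symm hxv.symm
          (c12 v hv c2' hc2').symm (st2 c2' hc2' c2s hc2s) (fun h => h2' h.symm)
          (c23 c2s hc2s c3r hc3r).symm (fun h => a13 v hv c3r hc3r h.symm)
          (fun h => h3e c3r hc3r h.symm)
      exact (add1 hS0 hS2 h3e hS4n).elim
    · push_neg at h2e
      obtain ⟨c2r, hc2r⟩ := n2
      have hS4n : ∀ c4 ∈ S4, ¬ G.Adj x c4 := by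
        intro c4 hc4 h4
        exact toolT hH hB hxv huv.symm hxu
          h4.symm (fun h => a14 v hv c4 hc4 h.symm) (fun h => a04 u hu c4 hc4 h.symm)
          (c12 v hv c2r hc2r).symm (fun h => h2e c2r hc2r h.symm)
          (fun h => a02 u hu c2r hc2r h.symm)
      have hS1 : ∀ v' ∈ S1, G.Adj x v' := by
        intro v' hv'; by_contra h1
        exact toolT hH hB huv hxv.symm hxu.symm
          (c01 u hu v' hv').symm (st1 v' hv' v hv) (fun h => h1 h.symm)
          (c12 v hv c2r hc2r).symm (fun h => a02 u hu c2r hc2r h.symm)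
          (fun h => h2e c2r hc2r h.symm)
      exact (add0 hS1 h2e h3e hS4n).elim

/-- P5 case, common neighbour of an edge between `S1` and `S2`. -/
lemma mainP12 (hH : FreeOf G house) (hB : FreeOf G bull) {S0 S1 S2 S3 S4 : Set V}
    (c01 : ∀ a ∈ S0, ∀ b ∈ S1, G.Adj a b) (c12 : ∀ a ∈ S1, ∀ b ∈ S2, G.Adj a b)
    (c23 : ∀ a ∈ S2, ∀ b ∈ S3, G.Adj a b) (c34 : ∀ a ∈ S3, ∀ b ∈ S4, G.Adj a b)
    (a02 : ∀ a ∈ S0, ∀ b ∈ S2, ¬ G.Adj a b) (a03 : ∀ a ∈ S0, ∀ b ∈ S3, ¬ G.Adj a b)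
    (a04 : ∀ a ∈ S0, ∀ b ∈ S4, ¬ G.Adj a b) (a13 : ∀ a ∈ S1, ∀ b ∈ S3, ¬ G.Adj a b)
    (a14 : ∀ a ∈ S1, ∀ b ∈ S4, ¬ G.Adj a b) (a24 : ∀ a ∈ S2, ∀ b ∈ S4, ¬ G.Adj a b)
    (n0 : S0.Nonempty) (n3 : S3.Nonempty) (n4 : S4.Nonempty)
    (st0 : ∀ a ∈ S0, ∀ b ∈ S0, ¬ G.Adj a b) (st1 : ∀ a ∈ S1, ∀ b ∈ S1, ¬ G.Adj a b)
    (st2 : ∀ a ∈ S2, ∀ b ∈ S2, ¬ G.Adj a b) (st3 : ∀ a ∈ S3, ∀ b ∈ S3, ¬ G.Adj a b)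
    {x u v : V} (hu : u ∈ S1) (hv : v ∈ S2) (hxu : G.Adj x u) (hxv : G.Adj x v)
    (add1 : (∀ c ∈ S0, G.Adj x c) → (∀ c ∈ S2, G.Adj x c) → (∀ c ∈ S3, ¬ G.Adj x c) →
      (∀ c ∈ S4, ¬ G.Adj x c) → False)
    (add2 : (∀ c ∈ S1, G.Adj x c) → (∀ c ∈ S3, G.Adj x c) → (∀ c ∈ S0, ¬ G.Adj x c) →
      (∀ c ∈ S4, ¬ G.Adj x c) → False) :
    (∀ c ∈ S0, G.Adj x c) ∧ (∀ c ∈ S1, G.Adj x c) ∧ (∀ c ∈ S2, G.Adj x c) ∧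
      (∀ c ∈ S3, G.Adj x c) ∧ (∀ c ∈ S4, G.Adj x c) := by
  have huv : G.Adj u v := c12 u hu v hv
  have F1 : ∀ c0 ∈ S0, ∀ c3 ∈ S3, G.Adj x c0 ∨ G.Adj x c3 := by
    intro c0 hc0 c3 hc3; by_contra hcon
    push_neg at hcon
    exact toolT hH hB huv hxv.symm hxu.symm
      (c01 c0 hc0 u hu) (a02 c0 hc0 v hv) (fun h => hcon.1 h.symm)
      (c23 v hv c3 hc3).symm (fun h => a13 u hu c3 hc3 h.symm) (fun h => hcon.2 h.symm)
  by_cases h0e : ∃ c0 ∈ S0, G.Adj x c0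
  · obtain ⟨c0s, hc0s, hadj0⟩ := h0e
    by_cases h3e : ∃ c3 ∈ S3, G.Adj x c3
    · obtain ⟨c3s, hc3s, hadj3⟩ := h3e
      have hS4 : ∀ c4 ∈ S4, G.Adj x c4 := by
        intro c4 hc4; by_contra h4
        exact toolT hH hB hadj3 (c23 v hv c3s hc3s).symm hxv
          hadj0.symm (a03 c0s hc0s c3s hc3s) (a02 c0s hc0s v hv)
          (c34 c3s hc3s c4 hc4).symm (fun h => h4 h.symm) (fun h => a24 v hv c4 hc4 h.symm)
      have hS0 : ∀ c0' ∈ S0, G.Adj x c0' := by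
        intro c0' hc0'; by_contra h0'
        exact toolT hH hB hxu.symm hadj0 (c01 c0s hc0s u hu).symm
          (c01 c0' hc0' u hu) (fun h => h0' h.symm) (st0 c0' hc0' c0s hc0s)
          hadj3.symm (fun h => a13 u hu c3s hc3s h.symm) (fun h => a03 c0s hc0s c3s hc3s h.symm)
      obtain ⟨c4r, hc4r⟩ := n4
      have hS3 : ∀ c3' ∈ S3, G.Adj x c3' := by
        intro c3' hc3'; by_contra h3'
        exact toolT hH hB (hS4 c4r hc4r).symm hadj3 (c34 c3s hc3s c4r hc4r).symm
          (c34 c3' hc3' c4r hc4r) (fun h => h3' h.symm) (st3 c3' hc3' c3s hc3s)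
          hxu.symm (a14 u hu c4r hc4r) (a13 u hu c3s hc3s)
      have hS2 : ∀ c2' ∈ S2, G.Adj x c2' := by
        intro c2' hc2'; by_contra h2'
        exact toolT hH hB hadj3.symm hxv (c23 v hv c3s hc3s).symm
          (c23 c2' hc2' c3s hc3s) (fun h => h2' h.symm) (st2 c2' hc2' v hv)
          hadj0.symm (a03 c0s hc0s c3s hc3s) (a02 c0s hc0s v hv)
      have hS1 : ∀ u' ∈ S1, G.Adj x u' := by
        intro u' hu'; by_contra h1'
        exact toolT hH hB hxv.symm hxu huv.symm
          (c12 u' hu' v hv) (fun h => h1' h.symm) (st1 u' hu' u hu)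
          (hS4 c4r hc4r).symm (fun h => a24 v hv c4r hc4r h.symm)
          (fun h => a14 u hu c4r hc4r h.symm)
      exact ⟨hS0, hS1, hS2, hS3, hS4⟩
    · push_neg at h3e
      obtain ⟨c3r, hc3r⟩ := n3
      have hS4n : ∀ c4 ∈ S4, ¬ G.Adj x c4 := by
        intro c4 hc4 h4
        exact toolT hH hB hxv.symm hxu huv.symm
          (c23 v hv c3r hc3r).symm (fun h => h3e c3r hc3r h.symm)
          (fun h => a13 u hu c3r hc3r h.symm)
          h4.symm (fun h => a24 v hv c4 hc4 h.symm) (fun h => a14 u hu c4 hc4 h.symm)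
      have hS0 : ∀ c0' ∈ S0, G.Adj x c0' := by
        intro c0' hc0'
        exact (F1 c0' hc0' c3r hc3r).resolve_right (h3e c3r hc3r)
      have hS2 : ∀ c2' ∈ S2, G.Adj x c2' := by
        intro c2' hc2'; by_contra h2'
        exact toolT hH hB huv hxv.symm hxu.symm
          (c12 u hu c2' hc2').symm (st2 c2' hc2' v hv) (fun h => h2' h.symm)
          (c23 v hv c3r hc3r).symm (fun h => a13 u hu c3r hc3r h.symm)
          (fun h => h3e c3r hc3r h.symm)
      exact (add1 hS0 hS2 h3e hS4n).elim
  · push_neg at h0e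
    obtain ⟨c0r, hc0r⟩ := n0
    have hS3 : ∀ c3 ∈ S3, G.Adj x c3 := by
      intro c3 hc3
      exact (F1 c0r hc0r c3 hc3).resolve_left (h0e c0r hc0r)
    have hS1 : ∀ u' ∈ S1, G.Adj x u' := by
      intro u' hu'; by_contra h1'
      exact toolT hH hB huv.symm hxu.symm hxv.symm
        (c12 u' hu' v hv) (st1 u' hu' u hu) (fun h => h1' h.symm)
        (c01 c0r hc0r u hu) (a02 c0r hc0r v hv) (fun h => h0e c0r hc0r h.symm)
    have hS4n : ∀ c4 ∈ S4, ¬ G.Adj x c4 := by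
      intro c4 hc4 h4
      exact toolT hH hB hxu.symm hxv huv
        (c01 c0r hc0r u hu) (fun h => h0e c0r hc0r h.symm) (a02 c0r hc0r v hv)
        h4.symm (fun h => a14 u hu c4 hc4 h.symm) (fun h => a24 v hv c4 hc4 h.symm)
    exact (add2 hS1 hS3 h0e hS4n).elim

/-- C5 case, common neighbour of an edge between `S0` and `S1`. -/
lemma mainC01 (hH : FreeOf G house) (hB : FreeOf G bull) {S0 S1 S2 S3 S4 : Set V}
    (c01 : ∀ a ∈ S0, ∀ b ∈ S1, G.Adj a b) (c12 : ∀ a ∈ S1, ∀ b ∈ S2, G.Adj a b)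
    (c23 : ∀ a ∈ S2, ∀ b ∈ S3, G.Adj a b) (c34 : ∀ a ∈ S3, ∀ b ∈ S4, G.Adj a b)
    (c40 : ∀ a ∈ S4, ∀ b ∈ S0, G.Adj a b)
    (a02 : ∀ a ∈ S0, ∀ b ∈ S2, ¬ G.Adj a b) (a03 : ∀ a ∈ S0, ∀ b ∈ S3, ¬ G.Adj a b)
    (a13 : ∀ a ∈ S1, ∀ b ∈ S3, ¬ G.Adj a b) (a14 : ∀ a ∈ S1, ∀ b ∈ S4, ¬ G.Adj a b)
    (a24 : ∀ a ∈ S2, ∀ b ∈ S4, ¬ G.Adj a b)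
    (n2 : S2.Nonempty) (n3 : S3.Nonempty) (n4 : S4.Nonempty)
    (st0 : ∀ a ∈ S0, ∀ b ∈ S0, ¬ G.Adj a b) (st1 : ∀ a ∈ S1, ∀ b ∈ S1, ¬ G.Adj a b)
    (st2 : ∀ a ∈ S2, ∀ b ∈ S2, ¬ G.Adj a b) (st4 : ∀ a ∈ S4, ∀ b ∈ S4, ¬ G.Adj a b)
    {x u v : V} (hu : u ∈ S0) (hv : v ∈ S1) (hxu : G.Adj x u) (hxv : G.Adj x v)
    (add0 : (∀ c ∈ S1, G.Adj x c) → (∀ c ∈ S4, G.Adj x c) → (∀ c ∈ S2, ¬ G.Adj x c) →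
      (∀ c ∈ S3, ¬ G.Adj x c) → False)
    (add1 : (∀ c ∈ S0, G.Adj x c) → (∀ c ∈ S2, G.Adj x c) → (∀ c ∈ S3, ¬ G.Adj x c) →
      (∀ c ∈ S4, ¬ G.Adj x c) → False) :
    (∀ c ∈ S0, G.Adj x c) ∧ (∀ c ∈ S1, G.Adj x c) ∧ (∀ c ∈ S2, G.Adj x c) ∧
      (∀ c ∈ S3, G.Adj x c) ∧ (∀ c ∈ S4, G.Adj x c) := by
  have huv : G.Adj u v := c01 u hu v hv
  have CF1 : ∀ c4 ∈ S4, ∀ c2 ∈ S2, G.Adj x c4 ∨ G.Adj x c2 := by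
    intro c4 hc4 c2 hc2; by_contra hcon
    push_neg at hcon
    exact toolT hH hB huv hxv.symm hxu.symm
      (c40 c4 hc4 u hu) (fun h => a14 v hv c4 hc4 h.symm) (fun h => hcon.1 h.symm)
      (c12 v hv c2 hc2).symm (fun h => a02 u hu c2 hc2 h.symm) (fun h => hcon.2 h.symm)
  by_cases h2e : ∃ c2 ∈ S2, G.Adj x c2
  · obtain ⟨c2s, hc2s, hadj2⟩ := h2e
    by_cases h4e : ∃ c4 ∈ S4, G.Adj x c4
    · obtain ⟨c4s, hc4s, hadj4⟩ := h4e
      have hS3 : ∀ c3 ∈ S3, G.Adj x c3 := by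
        intro c3 hc3; by_contra h3
        exact toolT hH hB hadj4.symm hxu (c40 c4s hc4s u hu)
          (c34 c3 hc3 c4s hc4s) (fun h => h3 h.symm) (fun h => a03 u hu c3 hc3 h.symm)
          hadj2.symm (a24 c2s hc2s c4s hc4s) (fun h => a02 u hu c2s hc2s h.symm)
      have hS2 : ∀ c2' ∈ S2, G.Adj x c2' := by
        intro c2' hc2'; by_contra h2'
        exact toolT hH hB hxv.symm hadj2 (c12 v hv c2s hc2s)
          (c12 v hv c2' hc2').symm (fun h => h2' h.symm) (st2 c2' hc2' c2s hc2s)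
          hadj4.symm (fun h => a14 v hv c4s hc4s h.symm)
          (fun h => a24 c2s hc2s c4s hc4s h.symm)
      have hS4 : ∀ c4' ∈ S4, G.Adj x c4' := by
        intro c4' hc4'; by_contra h4'
        exact toolT hH hB hxu.symm hadj4 (c40 c4s hc4s u hu).symm
          (c40 c4' hc4' u hu) (fun h => h4' h.symm) (st4 c4' hc4' c4s hc4s)
          hadj2.symm (fun h => a02 u hu c2s hc2s h.symm) (a24 c2s hc2s c4s hc4s)
      obtain ⟨c3r, hc3r⟩ := n3
      have hS0 : ∀ u' ∈ S0, G.Adj x u' := by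
        intro u' hu'; by_contra h0'
        exact toolT hH hB hxv.symm hxu huv.symm
          (c01 u' hu' v hv) (fun h => h0' h.symm) (st0 u' hu' u hu)
          (hS3 c3r hc3r).symm (fun h => a13 v hv c3r hc3r h.symm)
          (fun h => a03 u hu c3r hc3r h.symm)
      have hS1 : ∀ v' ∈ S1, G.Adj x v' := by
        intro v' hv'; by_contra h1'
        exact toolT hH hB hxu.symm hxv huv
          (c01 u hu v' hv').symm (fun h => h1' h.symm) (st1 v' hv' v hv)
          (hS3 c3r hc3r).symm (fun h => a03 u hu c3r hc3r h.symm)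
          (fun h => a13 v hv c3r hc3r h.symm)
      exact ⟨hS0, hS1, hS2, hS3, hS4⟩
    · push_neg at h4e
      obtain ⟨c4r, hc4r⟩ := n4
      have hS3n : ∀ c3 ∈ S3, ¬ G.Adj x c3 := by
        intro c3 hc3 h3
        exact toolT hH hB h3 (c23 c2s hc2s c3 hc3).symm hadj2
          hxu.symm (a03 u hu c3 hc3) (a02 u hu c2s hc2s)
          (c34 c3 hc3 c4r hc4r).symm (fun h => h4e c4r hc4r h.symm)
          (fun h => a24 c2s hc2s c4r hc4r h.symm)
      obtain ⟨c3r, hc3r⟩ := n3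
      have hS0 : ∀ u' ∈ S0, G.Adj x u' := by
        intro u' hu'; by_contra h0'
        exact toolT hH hB (c12 v hv c2s hc2s) hadj2.symm hxv.symm
          (c01 u' hu' v hv) (a02 u' hu' c2s hc2s) (fun h => h0' h.symm)
          (c23 c2s hc2s c3r hc3r).symm (fun h => a13 v hv c3r hc3r h.symm)
          (fun h => hS3n c3r hc3r h.symm)
      have hS2 : ∀ c2' ∈ S2, G.Adj x c2' := by
        intro c2' hc2'; by_contra h2'
        exact toolT hH hB (c12 v hv c2s hc2s) hadj2.symm hxv.symm
          (c12 v hv c2' hc2').symm (st2 c2' hc2' c2s hc2s) (fun h => h2' h.symm)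
          (c23 c2s hc2s c3r hc3r).symm (fun h => a13 v hv c3r hc3r h.symm)
          (fun h => hS3n c3r hc3r h.symm)
      exact (add1 hS0 hS2 hS3n h4e).elim
  · push_neg at h2e
    obtain ⟨c2r, hc2r⟩ := n2
    have hS4 : ∀ c4 ∈ S4, G.Adj x c4 := by
      intro c4 hc4
      exact (CF1 c4 hc4 c2r hc2r).resolve_right (h2e c2r hc2r)
    have hS3n : ∀ c3 ∈ S3, ¬ G.Adj x c3 := by
      intro c3 hc3 h3
      obtain ⟨c4r, hc4r⟩ := n4
      exact toolT hH hB h3 (c34 c3 hc3 c4r hc4r) (hS4 c4r hc4r)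
        hxv.symm (a13 v hv c3 hc3) (a14 v hv c4r hc4r)
        (c23 c2r hc2r c3 hc3) (fun h => h2e c2r hc2r h.symm) (a24 c2r hc2r c4r hc4r)
    have hS1 : ∀ v' ∈ S1, G.Adj x v' := by
      intro v' hv'; by_contra h1'
      exact toolT hH hB huv hxv.symm hxu.symm
        (c01 u hu v' hv').symm (st1 v' hv' v hv) (fun h => h1' h.symm)
        (c12 v hv c2r hc2r).symm (fun h => a02 u hu c2r hc2r h.symm)
        (fun h => h2e c2r hc2r h.symm)
    exact (add0 hS1 hS4 h2e hS3n).elim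

variable {V : Type*} {G : SimpleGraph V}

/-- No vertex outside `A` can be complete to `A`. -/
lemma partIII (hH : FreeOf G house) (hB : FreeOf G bull)
    (hhom : ∀ S : Set V, IsProperHomogSet G S → IsStableSet G S)
    {A : Fin 5 → Set V} (hne : ∀ i, (A i).Nonempty)
    (pat : Fin 5 → Fin 5 → Bool)
    (hpc : ∀ i j, pat i j = true → ∀ a ∈ A i, ∀ b ∈ A j, G.Adj a b)
    (hpa : ∀ i j, i ≠ j → pat i j = false → ∀ a ∈ A i, ∀ b ∈ A j, ¬ G.Adj a b)
    (hp01 : pat 0 1 = true) (hp12 : pat 1 2 = true) (hp23 : pat 2 3 = true)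
    (hp34 : pat 3 4 = true)
    (hsel1 : ∀ np : Fin 5 → Bool,
      (∀ i j, pat i j = true → ¬(np i = true ∧ np j = true)) → (∃ i, np i = true) →
      ∃ i j k, np i = true ∧ pat i j = true ∧ np j = false ∧ pat k i = false ∧ k ≠ i ∧
        pat k j = false ∧ k ≠ j)
    (hsel2 : ∀ np : Fin 5 → Bool,
      (∀ i j, pat i j = true → ¬(np i = true ∧ np j = true)) → (∃ i, np i = true) →
      ∃ i k, np i = true ∧ np k = false ∧ pat k i = false ∧ k ≠ i)
    (hsel3 : ∀ np : Fin 5 → Bool,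
      (∀ i j, pat i j = true → ¬(np i = true ∧ np j = true)) → ∃ k, np k = false)
    (hsel4 : ∀ i : Fin 5, ∃ k, pat k i = false ∧ k ≠ i)
    (hPII : ∀ x, x ∉ (⋃ i, A i) → ∀ i j a b, a ∈ A i → b ∈ A j → G.Adj a b →
      G.Adj x a → G.Adj x b → ∀ c ∈ ⋃ i, A i, G.Adj x c)
    {w1 : V} (hw1U : w1 ∉ ⋃ i, A i) (hw1c : ∀ c ∈ ⋃ i, A i, G.Adj w1 c) : False := by
  classical
  set U : Set V := ⋃ i, A i with hUdef
  have hmemU : ∀ {i : Fin 5} {c : V}, c ∈ A i → c ∈ U :=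
    fun {i c} h => Set.mem_iUnion.mpr ⟨i, h⟩
  set W : Set V := {z | z ∉ U ∧ ∀ c ∈ U, G.Adj z c} with hWdef
  set Q : Set V := {z | z ∉ U ∧ ∀ w ∈ W, G.Adj z w} with hQdef
  have hw1W : w1 ∈ W := ⟨hw1U, hw1c⟩
  -- independence of the neighbourhood pattern of a non-complete outside vertex
  have hindep : ∀ z, z ∉ U → ¬(∀ c ∈ U, G.Adj z c) →
      ∀ i j, pat i j = true → ¬((∃ d ∈ A i, G.Adj z d) ∧ (∃ d ∈ A j, G.Adj z d)) := by
    rintro z hzU hznc i j hpij ⟨⟨a, ha, hza⟩, ⟨b, hb, hzb⟩⟩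
    exact hznc (hPII z hzU i j a b ha hb (hpc i j hpij a ha b hb) hza hzb)
  -- III.1 : a non-complete outside vertex missing some W-vertex is anticomplete to A
  have zA : ∀ z, z ∉ U → ¬(∀ c ∈ U, G.Adj z c) → ∀ w2 ∈ W, ¬ G.Adj z w2 →
      ∀ c ∈ U, ¬ G.Adj z c := by
    intro z hzU hznc w2 hw2 hzw2 c hcU hzc
    obtain ⟨i0, hci0⟩ := Set.mem_iUnion.mp hcU
    set npB : Fin 5 → Bool := fun t => decide (∃ d ∈ A t, G.Adj z d) with hnpBdef
    have hT : ∀ t, npB t = true ↔ ∃ d ∈ A t, G.Adj z d := fun t => by simp [hnpBdef]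
    have hF : ∀ t, npB t = false → ∀ d ∈ A t, ¬ G.Adj z d := by
      intro t ht d hd hzd
      have : npB t = true := (hT t).mpr ⟨d, hd, hzd⟩
      simp [this] at ht
    obtain ⟨i, j, k, h1, h2, h3, h4, h5, h6, h7⟩ :=
      hsel1 npB (fun i j hp hc => hindep z hzU hznc i j hp ⟨(hT i).mp hc.1, (hT j).mp hc.2⟩)
        ⟨i0, (hT i0).mpr ⟨c, hci0, hzc⟩⟩
    obtain ⟨a, ha, hza⟩ := (hT i).mp h1
    obtain ⟨vj, hvj⟩ := hne j
    obtain ⟨ck, hck⟩ := hne k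
    exact toolT hH hB
      (hw2.2 a (hmemU ha)).symm (hw2.2 vj (hmemU hvj)) (hpc i j h2 a ha vj hvj)
      hza hzw2 (fun h => hF j h3 vj hvj h)
      (hw2.2 ck (hmemU hck)).symm (hpa k i h5 h4 ck hck a ha) (hpa k j h7 h6 ck hck vj hvj)
  -- the reachable set
  obtain ⟨u0, hu0⟩ := hne 0
  obtain ⟨v1, hv1⟩ := hne 1
  obtain ⟨d2, hd2⟩ := hne 2
  obtain ⟨e3, he3⟩ := hne 3
  set step : V → V → Prop := fun s t => (s ∈ U ∪ Q) ∧ (t ∈ U ∪ Q) ∧ G.Adj s t with hstepdef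
  set S : Set V := {z | Relation.ReflTransGen step u0 z} with hSdef
  have hu0S : u0 ∈ S := Relation.ReflTransGen.refl
  have hSsub : ∀ z ∈ S, z ∈ U ∪ Q := by
    intro z hz
    induction hz with
    | refl => exact Or.inl (hmemU hu0)
    | tail _ h _ => exact h.2.1
  have hstep2 : ∀ {a b : V} {i j : Fin 5}, a ∈ A i → b ∈ A j → G.Adj a b → step a b :=
    fun {a b i j} ha hb hab => ⟨Or.inl (hmemU ha), Or.inl (hmemU hb), hab⟩
  have hUS : ∀ c ∈ U, c ∈ S := by
    intro c hc
    obtain ⟨i, hci⟩ := Set.mem_iUnion.mp hc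
    have s01 : step u0 v1 := hstep2 hu0 hv1 (hpc 0 1 hp01 u0 hu0 v1 hv1)
    have s12 : step v1 d2 := hstep2 hv1 hd2 (hpc 1 2 hp12 v1 hv1 d2 hd2)
    have s23 : step d2 e3 := hstep2 hd2 he3 (hpc 2 3 hp23 d2 hd2 e3 he3)
    fin_cases i
    · exact Relation.ReflTransGen.tail (Relation.ReflTransGen.single s01)
        (hstep2 hv1 hci (hpc 0 1 hp01 c hci v1 hv1).symm)
    · exact Relation.ReflTransGen.single (hstep2 hu0 hci (hpc 0 1 hp01 u0 hu0 c hci))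
    · exact Relation.ReflTransGen.tail (Relation.ReflTransGen.single s01)
        (hstep2 hv1 hci (hpc 1 2 hp12 v1 hv1 c hci))
    · exact Relation.ReflTransGen.tail
        (Relation.ReflTransGen.tail (Relation.ReflTransGen.single s01) s12)
        (hstep2 hd2 hci (hpc 2 3 hp23 d2 hd2 c hci))
    · exact Relation.ReflTransGen.tail
        (Relation.ReflTransGen.tail
          (Relation.ReflTransGen.tail (Relation.ReflTransGen.single s01) s12) s23)
        (hstep2 he3 hci (hpc 3 4 hp34 e3 he3 c hci))
  have hWS : ∀ w ∈ W, w ∉ S := by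
    intro w hw hwS
    rcases hSsub w hwS with h | h
    · exact hw.1 h
    · exact G.irrefl (h.2 w hw)
  -- chain argument: such z is anticomplete to all of S
  have chainN : ∀ z, z ∉ U → ¬(∀ c ∈ U, G.Adj z c) → ∀ w2 ∈ W, ¬ G.Adj z w2 →
      ∀ s ∈ S, ¬ G.Adj z s := by
    intro z hzU hznc w2 hw2 hzw2 s hs
    induction hs with
    | refl => exact zA z hzU hznc w2 hw2 hzw2 u0 (hmemU hu0)
    | tail hpath hst ih =>
      rename_i y s'
      rcases hst.2.1 with hsU | hsQ
      · exact zA z hzU hznc w2 hw2 hzw2 s' hsU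
      · intro hzs
        have hsW : ¬ (∀ c ∈ U, G.Adj s' c) := by
          intro hcomp
          exact G.irrefl (hsQ.2 s' ⟨hsQ.1, hcomp⟩)
        by_cases hnp : ∃ t, ∃ d ∈ A t, G.Adj s' d
        · set npB : Fin 5 → Bool := fun t => decide (∃ d ∈ A t, G.Adj s' d) with hnpBdef
          have hT : ∀ t, npB t = true ↔ ∃ d ∈ A t, G.Adj s' d := fun t => by simp [hnpBdef]
          have hF : ∀ t, npB t = false → ∀ d ∈ A t, ¬ G.Adj s' d := by
            intro t ht d hd hzd
            have : npB t = true := (hT t).mpr ⟨d, hd, hzd⟩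
            simp [this] at ht
          obtain ⟨t0, ht0⟩ := hnp
          obtain ⟨i, k, h1, h2, h3, h4⟩ := hsel2 npB
            (fun i j hp hc => hindep s' hsQ.1 hsW i j hp ⟨(hT i).mp hc.1, (hT j).mp hc.2⟩)
            ⟨t0, (hT t0).mpr ht0⟩
          obtain ⟨a, ha, hsa⟩ := (hT i).mp h1
          obtain ⟨ck, hck⟩ := hne k
          exact toolT hH hB
            (hsQ.2 w2 hw2) (hw2.2 a (hmemU ha)) hsa
            hzs hzw2 (zA z hzU hznc w2 hw2 hzw2 a (hmemU ha))
            (hw2.2 ck (hmemU hck)).symm (fun h => hF k h2 ck hck h.symm)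
            (hpa k i h4 h3 ck hck a ha)
        · push_neg at hnp
          have hsAnti : ∀ c ∈ U, ¬ G.Adj s' c := by
            intro c hc
            obtain ⟨i, hci⟩ := Set.mem_iUnion.mp hc
            exact hnp i c hci
          have hw2y : G.Adj w2 y := by
            rcases hst.1 with hyU | hyQ
            · exact hw2.2 y hyU
            · exact (hyQ.2 w2 hw2).symm
          have hcky : ∃ ck, ck ∈ U ∧ ¬ G.Adj ck y := by
            rcases hst.1 with hyU | hyQ
            · obtain ⟨iy, hyiy⟩ := Set.mem_iUnion.mp hyU
              obtain ⟨k, hk1, hk2⟩ := hsel4 iy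
              obtain ⟨ck, hck⟩ := hne k
              exact ⟨ck, hmemU hck, hpa k iy hk2 hk1 ck hck y hyiy⟩
            · by_cases hnpy : ∃ t, ∃ d ∈ A t, G.Adj y d
              · have hyW : ¬ (∀ c ∈ U, G.Adj y c) := by
                  intro hcomp
                  exact G.irrefl (hyQ.2 y ⟨hyQ.1, hcomp⟩)
                set npB : Fin 5 → Bool := fun t => decide (∃ d ∈ A t, G.Adj y d) with hnpBdef
                have hT : ∀ t, npB t = true ↔ ∃ d ∈ A t, G.Adj y d := fun t => by
                  simp [hnpBdef]
                obtain ⟨k, hk⟩ := hsel3 npB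
                  (fun i j hp hc => hindep y hyQ.1 hyW i j hp ⟨(hT i).mp hc.1, (hT j).mp hc.2⟩)
                obtain ⟨ck, hck⟩ := hne k
                refine ⟨ck, hmemU hck, fun h => ?_⟩
                have : npB k = true := (hT k).mpr ⟨ck, hck, h.symm⟩
                simp [this] at hk
              · push_neg at hnpy
                exact ⟨u0, hmemU hu0, fun h => hnpy 0 u0 hu0 h.symm⟩
          obtain ⟨ck, hckU, hcky⟩ := hcky
          exact toolT hH hB
            (hsQ.2 w2 hw2) hw2y hst.2.2.symm
            hzs hzw2 ih
            (hw2.2 ck hckU).symm (fun h => hsAnti ck hckU h.symm) hcky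
  -- S is a proper homogeneous set
  have hhomog : IsHomogSet G S := by
    intro z hzS
    by_cases hzUQ : z ∈ U ∪ Q
    · right; intro s hs hzs
      exact hzS (Relation.ReflTransGen.tail hs ⟨hSsub s hs, hzUQ, hzs.symm⟩)
    · have hzU : z ∉ U := fun h => hzUQ (Or.inl h)
      have hzQ : z ∉ Q := fun h => hzUQ (Or.inr h)
      by_cases hzW : z ∈ W
      · left; intro s hs
        rcases hSsub s hs with h | h
        · exact hzW.2 s h
        · exact (h.2 z hzW).symm
      · have hznc : ¬ ∀ c ∈ U, G.Adj z c := fun h => hzW ⟨hzU, h⟩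
        have hw2 : ∃ w2 ∈ W, ¬ G.Adj z w2 := by
          by_contra hcon
          push_neg at hcon
          exact hzQ ⟨hzU, hcon⟩
        obtain ⟨w2, hw2, hzw2⟩ := hw2
        exact Or.inr fun s hs => chainN z hzU hznc w2 hw2 hzw2 s hs
  have hadj01 : G.Adj u0 v1 := hpc 0 1 hp01 u0 hu0 v1 hv1
  have hv1S : v1 ∈ S := hUS v1 (hmemU hv1)
  have hstable := hhom S ⟨hhomog, ⟨u0, hu0S, v1, hv1S, hadj01.ne⟩, fun h => hWS w1 hw1W (by rw [h]; trivial)⟩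
  exact hstable hu0S hv1S hadj01.ne hadj01
variable {V : Type*} {G : SimpleGraph V} {A : Fin 5 → Set V}

lemma fin5cases : ∀ m j : Fin 5, m = j ∨ m + 1 = j ∨ m + 2 = j ∨ m + 3 = j ∨ m + 4 = j := by
  decide

lemma symC {S T : Set V} (h : ∀ a ∈ S, ∀ b ∈ T, G.Adj a b) :
    ∀ a ∈ T, ∀ b ∈ S, G.Adj a b := fun a ha b hb => (h b hb a ha).symm

lemma symA {S T : Set V} (h : ∀ a ∈ S, ∀ b ∈ T, ¬ G.Adj a b) :
    ∀ a ∈ T, ∀ b ∈ S, ¬ G.Adj a b := fun a ha b hb hx => h b hb a ha hx.symm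

lemma compAllC (hg : GoodTuple G A) (hC : CompleteTo G (A 4) (A 0)) :
    ∀ m : Fin 5, ∀ a ∈ A m, ∀ b ∈ A (m + 1), G.Adj a b := by
  intro m
  by_cases hm : m = 4
  · subst hm; exact hC
  · exact hg.2.2.1 m hm

/-- Every part of a good tuple is stable. -/
lemma stableAll (hH : FreeOf G house) (hB : FreeOf G bull) (hg : GoodTuple G A)
    (hhom : ∀ S : Set V, IsProperHomogSet G S → IsStableSet G S) :
    ∀ i : Fin 5, ∀ a ∈ A i, ∀ b ∈ A i, ¬ G.Adj a b := by
  have n0 := hg.1 0; have n1 := hg.1 1; have n2 := hg.1 2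
  have n3 := hg.1 3; have n4 := hg.1 4
  have c0 : ∀ a ∈ A 0, ∀ b ∈ A 1, G.Adj a b := hg.2.2.1 0 (by decide)
  have c1 : ∀ a ∈ A 1, ∀ b ∈ A 2, G.Adj a b := hg.2.2.1 1 (by decide)
  have c2 : ∀ a ∈ A 2, ∀ b ∈ A 3, G.Adj a b := hg.2.2.1 2 (by decide)
  have c3 : ∀ a ∈ A 3, ∀ b ∈ A 4, G.Adj a b := hg.2.2.1 3 (by decide)
  have t0 : ∀ a ∈ A 0, ∀ b ∈ A 2, ¬ G.Adj a b := hg.2.2.2.1 0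
  have t1 : ∀ a ∈ A 1, ∀ b ∈ A 3, ¬ G.Adj a b := hg.2.2.2.1 1
  have t2 : ∀ a ∈ A 2, ∀ b ∈ A 4, ¬ G.Adj a b := hg.2.2.2.1 2
  have t3 : ∀ a ∈ A 3, ∀ b ∈ A 0, ¬ G.Adj a b := hg.2.2.2.1 3
  have t4 : ∀ a ∈ A 4, ∀ b ∈ A 1, ¬ G.Adj a b := hg.2.2.2.1 4
  rcases hg.2.2.2.2 with hC | hP
  · -- C5 case
    have c4 : ∀ a ∈ A 4, ∀ b ∈ A 0, G.Adj a b := hC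
    intro i
    fin_cases i
    · intro a ha b hb hab
      obtain ⟨cr, hcr⟩ := hg.1 1
      refine homogCore hhom (R := {y | (∀ c ∈ A 1, G.Adj y c) ∧ (∀ f ∈ A 4, G.Adj y f) ∧
          (∀ d ∈ A 2, ¬ G.Adj y d) ∧ (∀ e ∈ A 3, ¬ G.Adj y e)}) ?_ ?_ hab ?_ ⟨cr, ?_⟩
      · exact ⟨fun c hc => c0 a ha c hc, fun f hf => (c4 f hf a ha).symm,
          fun d hd => t0 a ha d hd, fun e he h => t3 e he a ha h.symm⟩
      · exact ⟨fun c hc => c0 b hb c hc, fun f hf => (c4 f hf b hb).symm,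
          fun d hd => t0 b hb d hd, fun e he h => t3 e he b hb h.symm⟩
      · intro y z x hy hz hyz hxy hxz
        exact mixedC hH hB c1 c3 t1 (symA t4) t2 n1 n2 n3 n4
          hy.1 hy.2.1 hy.2.2.1 hy.2.2.2 hz.1 hz.2.1 hz.2.2.1 hz.2.2.2 hyz hxy hxz
      · intro hR; exact G.irrefl (hR.1 cr hcr)
    · intro a ha b hb hab
      obtain ⟨cr, hcr⟩ := hg.1 2
      refine homogCore hhom (R := {y | (∀ c ∈ A 2, G.Adj y c) ∧ (∀ f ∈ A 0, G.Adj y f) ∧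
          (∀ d ∈ A 3, ¬ G.Adj y d) ∧ (∀ e ∈ A 4, ¬ G.Adj y e)}) ?_ ?_ hab ?_ ⟨cr, ?_⟩
      · exact ⟨fun c hc => c1 a ha c hc, fun f hf => (c0 f hf a ha).symm,
          fun d hd => t1 a ha d hd, fun e he h => t4 e he a ha h.symm⟩
      · exact ⟨fun c hc => c1 b hb c hc, fun f hf => (c0 f hf b hb).symm,
          fun d hd => t1 b hb d hd, fun e he h => t4 e he b hb h.symm⟩
      · intro y z x hy hz hyz hxy hxz
        exact mixedC hH hB c2 c4 t2 (symA t0) t3 n2 n3 n4 n0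
          hy.1 hy.2.1 hy.2.2.1 hy.2.2.2 hz.1 hz.2.1 hz.2.2.1 hz.2.2.2 hyz hxy hxz
      · intro hR; exact G.irrefl (hR.1 cr hcr)
    · intro a ha b hb hab
      obtain ⟨cr, hcr⟩ := hg.1 3
      refine homogCore hhom (R := {y | (∀ c ∈ A 3, G.Adj y c) ∧ (∀ f ∈ A 1, G.Adj y f) ∧
          (∀ d ∈ A 4, ¬ G.Adj y d) ∧ (∀ e ∈ A 0, ¬ G.Adj y e)}) ?_ ?_ hab ?_ ⟨cr, ?_⟩
      · exact ⟨fun c hc => c2 a ha c hc, fun f hf => (c1 f hf a ha).symm,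
          fun d hd => t2 a ha d hd, fun e he h => t0 e he a ha h.symm⟩
      · exact ⟨fun c hc => c2 b hb c hc, fun f hf => (c1 f hf b hb).symm,
          fun d hd => t2 b hb d hd, fun e he h => t0 e he b hb h.symm⟩
      · intro y z x hy hz hyz hxy hxz
        exact mixedC hH hB c3 c0 t3 (symA t1) t4 n3 n4 n0 n1
          hy.1 hy.2.1 hy.2.2.1 hy.2.2.2 hz.1 hz.2.1 hz.2.2.1 hz.2.2.2 hyz hxy hxz
      · intro hR; exact G.irrefl (hR.1 cr hcr)
    · intro a ha b hb hab
      obtain ⟨cr, hcr⟩ := hg.1 4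
      refine homogCore hhom (R := {y | (∀ c ∈ A 4, G.Adj y c) ∧ (∀ f ∈ A 2, G.Adj y f) ∧
          (∀ d ∈ A 0, ¬ G.Adj y d) ∧ (∀ e ∈ A 1, ¬ G.Adj y e)}) ?_ ?_ hab ?_ ⟨cr, ?_⟩
      · exact ⟨fun c hc => c3 a ha c hc, fun f hf => (c2 f hf a ha).symm,
          fun d hd => t3 a ha d hd, fun e he h => t1 e he a ha h.symm⟩
      · exact ⟨fun c hc => c3 b hb c hc, fun f hf => (c2 f hf b hb).symm,
          fun d hd => t3 b hb d hd, fun e he h => t1 e he b hb h.symm⟩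
      · intro y z x hy hz hyz hxy hxz
        exact mixedC hH hB c4 c1 t4 (symA t2) t0 n4 n0 n1 n2
          hy.1 hy.2.1 hy.2.2.1 hy.2.2.2 hz.1 hz.2.1 hz.2.2.1 hz.2.2.2 hyz hxy hxz
      · intro hR; exact G.irrefl (hR.1 cr hcr)
    · intro a ha b hb hab
      obtain ⟨cr, hcr⟩ := hg.1 0
      refine homogCore hhom (R := {y | (∀ c ∈ A 0, G.Adj y c) ∧ (∀ f ∈ A 3, G.Adj y f) ∧
          (∀ d ∈ A 1, ¬ G.Adj y d) ∧ (∀ e ∈ A 2, ¬ G.Adj y e)}) ?_ ?_ hab ?_ ⟨cr, ?_⟩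
      · exact ⟨fun c hc => c4 a ha c hc, fun f hf => (c3 f hf a ha).symm,
          fun d hd => t4 a ha d hd, fun e he h => t2 e he a ha h.symm⟩
      · exact ⟨fun c hc => c4 b hb c hc, fun f hf => (c3 f hf b hb).symm,
          fun d hd => t4 b hb d hd, fun e he h => t2 e he b hb h.symm⟩
      · intro y z x hy hz hyz hxy hxz
        exact mixedC hH hB c0 c2 t0 (symA t3) t1 n0 n1 n2 n3
          hy.1 hy.2.1 hy.2.2.1 hy.2.2.2 hz.1 hz.2.1 hz.2.2.1 hz.2.2.2 hyz hxy hxz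
      · intro hR; exact G.irrefl (hR.1 cr hcr)
  · -- P5 case
    intro i
    fin_cases i
    · -- i = 0 : type (complete A1, anti A2,A3,A4)
      intro a ha b hb hab
      obtain ⟨cr, hcr⟩ := hg.1 1
      refine homogCore hhom (R := {y | (∀ c ∈ A 1, G.Adj y c) ∧ (∀ d ∈ A 2, ¬ G.Adj y d) ∧
          (∀ e ∈ A 3, ¬ G.Adj y e) ∧ (∀ f ∈ A 4, ¬ G.Adj y f)}) ?_ ?_ hab ?_ ⟨cr, ?_⟩
      · exact ⟨fun c hc => c0 a ha c hc, fun d hd => t0 a ha d hd,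
          fun e he h => t3 e he a ha h.symm, fun f hf h => hP f hf a ha h.symm⟩
      · exact ⟨fun c hc => c0 b hb c hc, fun d hd => t0 b hb d hd,
          fun e he h => t3 e he b hb h.symm, fun f hf h => hP f hf b hb h.symm⟩
      · intro y z x hy hz hyz hxy hxz
        exact mixedP0 hH hB c1 c2 c3 t1 (symA t4) t2 n1 n2 n3 n4
          hy.1 hy.2.1 hy.2.2.1 hy.2.2.2 hz.1 hz.2.1 hz.2.2.1 hz.2.2.2 hyz hxy hxz
      · intro hR; exact G.irrefl (hR.1 cr hcr)
    · -- i = 1 : type (complete A0,A2; anti A3,A4)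
      intro a ha b hb hab
      obtain ⟨cr, hcr⟩ := hg.1 0
      refine homogCore hhom (R := {y | (∀ z ∈ A 0, G.Adj y z) ∧ (∀ d ∈ A 2, G.Adj y d) ∧
          (∀ e ∈ A 3, ¬ G.Adj y e) ∧ (∀ f ∈ A 4, ¬ G.Adj y f)}) ?_ ?_ hab ?_ ⟨cr, ?_⟩
      · exact ⟨fun z hz => (c0 z hz a ha).symm, fun d hd => c1 a ha d hd,
          fun e he => t1 a ha e he, fun f hf h => t4 f hf a ha h.symm⟩
      · exact ⟨fun z hz => (c0 z hz b hb).symm, fun d hd => c1 b hb d hd,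
          fun e he => t1 b hb e he, fun f hf h => t4 f hf b hb h.symm⟩
      · intro y z x hy hz hyz hxy hxz
        exact mixedP1 hH hB c2 c3 t0 (symA t3) t2 n0 n2 n3 n4
          hy.1 hy.2.1 hy.2.2.1 hy.2.2.2 hz.1 hz.2.1 hz.2.2.1 hz.2.2.2 hyz hxy hxz
      · intro hR; exact G.irrefl (hR.1 cr hcr)
    · -- i = 2 : type (complete A1,A3; anti A0,A4)
      intro a ha b hb hab
      obtain ⟨cr, hcr⟩ := hg.1 1
      refine homogCore hhom (R := {y | (∀ c ∈ A 1, G.Adj y c) ∧ (∀ e ∈ A 3, G.Adj y e) ∧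
          (∀ z ∈ A 0, ¬ G.Adj y z) ∧ (∀ f ∈ A 4, ¬ G.Adj y f)}) ?_ ?_ hab ?_ ⟨cr, ?_⟩
      · exact ⟨fun c hc => (c1 c hc a ha).symm, fun e he => c2 a ha e he,
          fun z hz h => t0 z hz a ha h.symm, fun f hf => t2 a ha f hf⟩
      · exact ⟨fun c hc => (c1 c hc b hb).symm, fun e he => c2 b hb e he,
          fun z hz h => t0 z hz b hb h.symm, fun f hf => t2 b hb f hf⟩
      · intro y z x hy hz hyz hxy hxz
        exact mixedP2 hH hB c0 c3 (symA t3) (symA hP) t1 (symA t4) n0 n1 n3 n4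
          hy.1 hy.2.1 hy.2.2.1 hy.2.2.2 hz.1 hz.2.1 hz.2.2.1 hz.2.2.2 hyz hxy hxz
      · intro hR; exact G.irrefl (hR.1 cr hcr)
    · -- i = 3 : type (complete A4,A2; anti A1,A0)  (mixedP1 with S0,S2,S3,S4 = A4,A2,A1,A0)
      intro a ha b hb hab
      obtain ⟨cr, hcr⟩ := hg.1 4
      refine homogCore hhom (R := {y | (∀ z ∈ A 4, G.Adj y z) ∧ (∀ d ∈ A 2, G.Adj y d) ∧
          (∀ e ∈ A 1, ¬ G.Adj y e) ∧ (∀ f ∈ A 0, ¬ G.Adj y f)}) ?_ ?_ hab ?_ ⟨cr, ?_⟩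
      · exact ⟨fun z hz => c3 a ha z hz, fun d hd => (c2 d hd a ha).symm,
          fun e he h => t1 e he a ha h.symm, fun f hf => t3 a ha f hf⟩
      · exact ⟨fun z hz => c3 b hb z hz, fun d hd => (c2 d hd b hb).symm,
          fun e he h => t1 e he b hb h.symm, fun f hf => t3 b hb f hf⟩
      · intro y z x hy hz hyz hxy hxz
        exact mixedP1 hH hB (symC c1) (symC c0) (symA t2) t4 (symA t0) n4 n2 n1 n0
          hy.1 hy.2.1 hy.2.2.1 hy.2.2.2 hz.1 hz.2.1 hz.2.2.1 hz.2.2.2 hyz hxy hxz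
      · intro hR; exact G.irrefl (hR.1 cr hcr)
    · -- i = 4 : type (complete A3; anti A2,A1,A0)  (mixedP0 with S1..S4 = A3,A2,A1,A0)
      intro a ha b hb hab
      obtain ⟨cr, hcr⟩ := hg.1 3
      refine homogCore hhom (R := {y | (∀ c ∈ A 3, G.Adj y c) ∧ (∀ d ∈ A 2, ¬ G.Adj y d) ∧
          (∀ e ∈ A 1, ¬ G.Adj y e) ∧ (∀ f ∈ A 0, ¬ G.Adj y f)}) ?_ ?_ hab ?_ ⟨cr, ?_⟩
      · exact ⟨fun c hc => c3 c hc a ha |>.symm, fun d hd => t2 d hd a ha |> fun _ => by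
          exact fun h => t2 d hd a ha h.symm, fun e he h => t4 a ha e he h, fun f hf => hP a ha f hf⟩
      · exact ⟨fun c hc => c3 c hc b hb |>.symm, fun d hd h => t2 d hd b hb h.symm,
          fun e he h => t4 b hb e he h, fun f hf => hP b hb f hf⟩
      · intro y z x hy hz hyz hxy hxz
        exact mixedP0 hH hB (symC c2) (symC c1) (symC c0) (symA t1) t3 (symA t0) n3 n2 n1 n0
          hy.1 hy.2.1 hy.2.2.1 hy.2.2.2 hz.1 hz.2.1 hz.2.2.1 hz.2.2.2 hyz hxy hxz
      · intro hR; exact G.irrefl (hR.1 cr hcr)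

variable {V : Type*} {G : SimpleGraph V} {A : Fin 5 → Set V}

/-- C5 case: a vertex outside `A` adjacent to both ends of an edge between
`A m` and `A (m+1)` is complete to `A`. -/
lemma instC (hH : FreeOf G house) (hB : FreeOf G bull) (hA : MaximalGoodTuple G A)
    (hC : CompleteTo G (A 4) (A 0))
    (hst : ∀ i : Fin 5, ∀ a ∈ A i, ∀ b ∈ A i, ¬ G.Adj a b)
    (m : Fin 5) {x u v : V} (hx : x ∉ ⋃ i, A i)
    (hu : u ∈ A m) (hv : v ∈ A (m + 1)) (hxu : G.Adj x u) (hxv : G.Adj x v) :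
    ∀ c ∈ ⋃ i, A i, G.Adj x c := by
  have hg := hA.1
  have CA := compAllC hg hC
  have TA := hg.2.2.2.1
  have e1 : m + 1 + 1 = m + 2 := by rw [add_assoc, show (1:Fin 5)+1 = 2 by decide]
  have e2 : m + 2 + 1 = m + 3 := by rw [add_assoc, show (2:Fin 5)+1 = 3 by decide]
  have e3 : m + 3 + 1 = m + 4 := by rw [add_assoc, show (3:Fin 5)+1 = 4 by decide]
  have e4 : m + 4 + 1 = m := by rw [add_assoc, show (4:Fin 5)+1 = 0 by decide]; exact add_zero m
  have f1 : m + 1 + 2 = m + 3 := by rw [add_assoc, show (1:Fin 5)+2 = 3 by decide]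
  have f2 : m + 2 + 2 = m + 4 := by rw [add_assoc, show (2:Fin 5)+2 = 4 by decide]
  have f3 : m + 3 + 2 = m := by rw [add_assoc, show (3:Fin 5)+2 = 0 by decide]; exact add_zero m
  have f4 : m + 4 + 2 = m + 1 := by rw [add_assoc, show (4:Fin 5)+2 = 1 by decide]
  have c01 := CA m
  have c12 := e1 ▸ CA (m + 1)
  have c23 := e2 ▸ CA (m + 2)
  have c34 := e3 ▸ CA (m + 3)
  have c40 := e4 ▸ CA (m + 4)
  have a02 := TA m
  have a13 := f1 ▸ TA (m + 1)
  have a24 := f2 ▸ TA (m + 2)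
  have a30 := f3 ▸ TA (m + 3)
  have a41 := f4 ▸ TA (m + 4)
  have add0 : (∀ c ∈ A (m+1), G.Adj x c) → (∀ c ∈ A (m+4), G.Adj x c) →
      (∀ c ∈ A (m+2), ¬ G.Adj x c) → (∀ c ∈ A (m+3), ¬ G.Adj x c) → False := by
    intro k1 k4 k2 k3
    refine addable hA m hx ?_ ?_
    · intro j hne hcomp c hc
      rcases fin5cases m j with h | h | h | h | h <;> subst h
      · exact absurd rfl hne
      · exact k1 c hc
      · obtain ⟨a2, ha2⟩ := hg.1 (m+2)
        exact absurd (hcomp u hu a2 ha2) (a02 u hu a2 ha2)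
      · obtain ⟨a3, ha3⟩ := hg.1 (m+3)
        exact absurd (hcomp u hu a3 ha3) (fun h => a30 a3 ha3 u hu h.symm)
      · exact k4 c hc
    · intro j hne hanti c hc
      rcases fin5cases m j with h | h | h | h | h <;> subst h
      · exact absurd rfl hne
      · obtain ⟨a1, ha1⟩ := hg.1 (m+1)
        exact absurd (c01 u hu a1 ha1) (hanti u hu a1 ha1)
      · exact k2 c hc
      · exact k3 c hc
      · obtain ⟨a4, ha4⟩ := hg.1 (m+4)
        exact absurd (c40 a4 ha4 u hu) (fun h => hanti u hu a4 ha4 h.symm)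
  have add1 : (∀ c ∈ A m, G.Adj x c) → (∀ c ∈ A (m+2), G.Adj x c) →
      (∀ c ∈ A (m+3), ¬ G.Adj x c) → (∀ c ∈ A (m+4), ¬ G.Adj x c) → False := by
    intro k0 k2 k3 k4
    refine addable hA (m+1) hx ?_ ?_
    · intro j hne hcomp c hc
      rcases fin5cases m j with h | h | h | h | h <;> subst h
      · exact k0 c hc
      · exact absurd rfl hne
      · exact k2 c hc
      · obtain ⟨a3, ha3⟩ := hg.1 (m+3)
        exact absurd (hcomp v hv a3 ha3) (a13 v hv a3 ha3)
      · obtain ⟨a4, ha4⟩ := hg.1 (m+4)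
        exact absurd (hcomp v hv a4 ha4) (fun h => a41 a4 ha4 v hv h.symm)
    · intro j hne hanti c hc
      rcases fin5cases m j with h | h | h | h | h <;> subst h
      · obtain ⟨a0, ha0⟩ := hg.1 m
        exact absurd (c01 a0 ha0 v hv) (fun h => hanti v hv a0 ha0 h.symm)
      · exact absurd rfl hne
      · obtain ⟨a2, ha2⟩ := hg.1 (m+2)
        exact absurd (c12 v hv a2 ha2) (hanti v hv a2 ha2)
      · exact k3 c hc
      · exact k4 c hc
  obtain ⟨hS0, hS1, hS2, hS3, hS4⟩ := mainC01 hH hB c01 c12 c23 c34 c40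
    a02 (symA a30) a13 (symA a41) a24 (hg.1 (m+2)) (hg.1 (m+3)) (hg.1 (m+4))
    (hst m) (hst (m+1)) (hst (m+2)) (hst (m+4)) hu hv hxu hxv add0 add1
  intro c hc
  obtain ⟨k, hck⟩ := Set.mem_iUnion.mp hc
  rcases fin5cases m k with h | h | h | h | h <;> subst h
  · exact hS0 c hck
  · exact hS1 c hck
  · exact hS2 c hck
  · exact hS3 c hck
  · exact hS4 c hck

variable {V : Type*} {G : SimpleGraph V} {A : Fin 5 → Set V}

/-- Part II': a vertex outside `A` adjacent to both ends of an edge of `A`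
is complete to `A`. -/
lemma PIIglobal (hH : FreeOf G house) (hB : FreeOf G bull) (hA : MaximalGoodTuple G A)
    (hhom : ∀ S : Set V, IsProperHomogSet G S → IsStableSet G S) :
    ∀ x, x ∉ (⋃ i, A i) → ∀ (i j : Fin 5) (a b : V), a ∈ A i → b ∈ A j → G.Adj a b →
      G.Adj x a → G.Adj x b → ∀ c ∈ ⋃ i, A i, G.Adj x c := by
  have hg := hA.1
  have hst := stableAll hH hB hg hhom
  intro x hx i j a b ha hb hab hxa hxb
  have ei3 : ∀ i : Fin 5, i + 3 + 2 = i := fun i => by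
    rw [add_assoc, show (3:Fin 5)+2 = 0 by decide]; exact add_zero i
  have ei4 : ∀ i : Fin 5, i + 4 + 1 = i := fun i => by
    rw [add_assoc, show (4:Fin 5)+1 = 0 by decide]; exact add_zero i
  rcases hg.2.2.2.2 with hC | hP
  · -- C5 case
    have key := instC hH hB hA hC hst
    rcases fin5cases i j with h | h | h | h | h <;> subst h
    · exact absurd hab (hst i a ha b hb)
    · exact key i hx ha hb hxa hxb
    · exact absurd hab (hg.2.2.2.1 i a ha b hb)
    · exact absurd hab.symm ((ei3 i ▸ hg.2.2.2.1 (i+3)) b hb a ha)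
    · exact key (i+4) hx hb ((ei4 i).symm ▸ ha) hxb hxa
  · -- P5 case
    have n0 := hg.1 0; have n1 := hg.1 1; have n2 := hg.1 2
    have n3 := hg.1 3; have n4 := hg.1 4
    obtain ⟨r0, hr0⟩ := hg.1 0; obtain ⟨r1, hr1⟩ := hg.1 1; obtain ⟨r2, hr2⟩ := hg.1 2
    obtain ⟨r3, hr3⟩ := hg.1 3; obtain ⟨r4, hr4⟩ := hg.1 4
    have c0 : ∀ a ∈ A 0, ∀ b ∈ A 1, G.Adj a b := hg.2.2.1 0 (by decide)
    have c1 : ∀ a ∈ A 1, ∀ b ∈ A 2, G.Adj a b := hg.2.2.1 1 (by decide)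
    have c2 : ∀ a ∈ A 2, ∀ b ∈ A 3, G.Adj a b := hg.2.2.1 2 (by decide)
    have c3 : ∀ a ∈ A 3, ∀ b ∈ A 4, G.Adj a b := hg.2.2.1 3 (by decide)
    have t0 : ∀ a ∈ A 0, ∀ b ∈ A 2, ¬ G.Adj a b := hg.2.2.2.1 0
    have t1 : ∀ a ∈ A 1, ∀ b ∈ A 3, ¬ G.Adj a b := hg.2.2.2.1 1
    have t2 : ∀ a ∈ A 2, ∀ b ∈ A 4, ¬ G.Adj a b := hg.2.2.2.1 2
    have t3 : ∀ a ∈ A 3, ∀ b ∈ A 0, ¬ G.Adj a b := hg.2.2.2.1 3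
    have t4 : ∀ a ∈ A 4, ∀ b ∈ A 1, ¬ G.Adj a b := hg.2.2.2.1 4
    have conc : (∀ c ∈ A 0, G.Adj x c) → (∀ c ∈ A 1, G.Adj x c) → (∀ c ∈ A 2, G.Adj x c) →
        (∀ c ∈ A 3, G.Adj x c) → (∀ c ∈ A 4, G.Adj x c) → ∀ c ∈ ⋃ i, A i, G.Adj x c := by
      intro h0 h1 h2 h3 h4 c hc
      obtain ⟨k, hk⟩ := Set.mem_iUnion.mp hc
      fin_cases k
      exacts [h0 c hk, h1 c hk, h2 c hk, h3 c hk, h4 c hk]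
    have mim0 : (∀ c ∈ A 1, G.Adj x c) → (∀ c ∈ A 2, ¬ G.Adj x c) →
        (∀ c ∈ A 3, ¬ G.Adj x c) → (∀ c ∈ A 4, ¬ G.Adj x c) → False := by
      intro k1 k2 k3 k4
      refine addable hA 0 hx ?_ ?_
      · intro j hne hcomp c hc
        fin_cases j
        · exact absurd rfl hne
        · exact k1 c hc
        · exact absurd (hcomp r0 hr0 r2 hr2) (t0 r0 hr0 r2 hr2)
        · exact absurd (hcomp r0 hr0 r3 hr3) (fun h => t3 r3 hr3 r0 hr0 h.symm)
        · exact absurd (hcomp r0 hr0 r4 hr4) (fun h => hP r4 hr4 r0 hr0 h.symm)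
      · intro j hne hanti c hc
        fin_cases j
        · exact absurd rfl hne
        · exact absurd (c0 r0 hr0 r1 hr1) (hanti r0 hr0 r1 hr1)
        · exact k2 c hc
        · exact k3 c hc
        · exact k4 c hc
    have mim1 : (∀ c ∈ A 0, G.Adj x c) → (∀ c ∈ A 2, G.Adj x c) →
        (∀ c ∈ A 3, ¬ G.Adj x c) → (∀ c ∈ A 4, ¬ G.Adj x c) → False := by
      intro k0 k2 k3 k4
      refine addable hA 1 hx ?_ ?_
      · intro j hne hcomp c hc
        fin_cases j
        · exact k0 c hc
        · exact absurd rfl hne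
        · exact k2 c hc
        · exact absurd (hcomp r1 hr1 r3 hr3) (t1 r1 hr1 r3 hr3)
        · exact absurd (hcomp r1 hr1 r4 hr4) (fun h => t4 r4 hr4 r1 hr1 h.symm)
      · intro j hne hanti c hc
        fin_cases j
        · exact absurd (c0 r0 hr0 r1 hr1).symm (hanti r1 hr1 r0 hr0)
        · exact absurd rfl hne
        · exact absurd (c1 r1 hr1 r2 hr2) (hanti r1 hr1 r2 hr2)
        · exact k3 c hc
        · exact k4 c hc
    have mim2 : (∀ c ∈ A 1, G.Adj x c) → (∀ c ∈ A 3, G.Adj x c) →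
        (∀ c ∈ A 0, ¬ G.Adj x c) → (∀ c ∈ A 4, ¬ G.Adj x c) → False := by
      intro k1 k3 k0 k4
      refine addable hA 2 hx ?_ ?_
      · intro j hne hcomp c hc
        fin_cases j
        · exact absurd (hcomp r2 hr2 r0 hr0) (fun h => t0 r0 hr0 r2 hr2 h.symm)
        · exact k1 c hc
        · exact absurd rfl hne
        · exact k3 c hc
        · exact absurd (hcomp r2 hr2 r4 hr4) (t2 r2 hr2 r4 hr4)
      · intro j hne hanti c hc
        fin_cases j
        · exact k0 c hc
        · exact absurd (c1 r1 hr1 r2 hr2).symm (hanti r2 hr2 r1 hr1)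
        · exact absurd rfl hne
        · exact absurd (c2 r2 hr2 r3 hr3) (hanti r2 hr2 r3 hr3)
        · exact k4 c hc
    have mim3 : (∀ c ∈ A 2, G.Adj x c) → (∀ c ∈ A 4, G.Adj x c) →
        (∀ c ∈ A 0, ¬ G.Adj x c) → (∀ c ∈ A 1, ¬ G.Adj x c) → False := by
      intro k2 k4 k0 k1
      refine addable hA 3 hx ?_ ?_
      · intro j hne hcomp c hc
        fin_cases j
        · exact absurd (hcomp r3 hr3 r0 hr0) (t3 r3 hr3 r0 hr0)
        · exact absurd (hcomp r3 hr3 r1 hr1) (fun h => t1 r1 hr1 r3 hr3 h.symm)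
        · exact k2 c hc
        · exact absurd rfl hne
        · exact k4 c hc
      · intro j hne hanti c hc
        fin_cases j
        · exact k0 c hc
        · exact k1 c hc
        · exact absurd (c2 r2 hr2 r3 hr3).symm (hanti r3 hr3 r2 hr2)
        · exact absurd rfl hne
        · exact absurd (c3 r3 hr3 r4 hr4) (hanti r3 hr3 r4 hr4)
    have mim4 : (∀ c ∈ A 3, G.Adj x c) → (∀ c ∈ A 0, ¬ G.Adj x c) →
        (∀ c ∈ A 1, ¬ G.Adj x c) → (∀ c ∈ A 2, ¬ G.Adj x c) → False := by
      intro k3 k0 k1 k2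
      refine addable hA 4 hx ?_ ?_
      · intro j hne hcomp c hc
        fin_cases j
        · exact absurd (hcomp r4 hr4 r0 hr0) (hP r4 hr4 r0 hr0)
        · exact absurd (hcomp r4 hr4 r1 hr1) (t4 r4 hr4 r1 hr1)
        · exact absurd (hcomp r4 hr4 r2 hr2) (fun h => t2 r2 hr2 r4 hr4 h.symm)
        · exact k3 c hc
        · exact absurd rfl hne
      · intro j hne hanti c hc
        fin_cases j
        · exact k0 c hc
        · exact k1 c hc
        · exact k2 c hc
        · exact absurd (c3 r3 hr3 r4 hr4).symm (hanti r4 hr4 r3 hr3)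
        · exact absurd rfl hne
    have key01 : ∀ {y z : V}, y ∈ A 0 → z ∈ A 1 → G.Adj x y → G.Adj x z →
        ∀ c ∈ ⋃ i, A i, G.Adj x c := by
      intro y z hy hz hxy hxz
      obtain ⟨h0, h1, h2, h3, h4⟩ := mainP01 hH hB c0 c1 c2 c3 t0 (symA t3) (symA hP) t1
        (symA t4) t2 n2 n3 n4 (hst 0) (hst 1) (hst 2) hy hz hxy hxz mim0 mim1
      exact conc h0 h1 h2 h3 h4
    have key12 : ∀ {y z : V}, y ∈ A 1 → z ∈ A 2 → G.Adj x y → G.Adj x z →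
        ∀ c ∈ ⋃ i, A i, G.Adj x c := by
      intro y z hy hz hxy hxz
      obtain ⟨h0, h1, h2, h3, h4⟩ := mainP12 hH hB c0 c1 c2 c3 t0 (symA t3) (symA hP) t1
        (symA t4) t2 n0 n3 n4 (hst 0) (hst 1) (hst 2) (hst 3) hy hz hxy hxz mim1 mim2
      exact conc h0 h1 h2 h3 h4
    have key23 : ∀ {y z : V}, y ∈ A 2 → z ∈ A 3 → G.Adj x y → G.Adj x z →
        ∀ c ∈ ⋃ i, A i, G.Adj x c := by
      intro y z hy hz hxy hxz
      obtain ⟨h4, h3, h2, h1, h0⟩ := mainP12 hH hB (symC c3) (symC c2) (symC c1) (symC c0)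
        (symA t2) t4 hP (symA t1) t3 (symA t0) n4 n1 n0 (hst 4) (hst 3) (hst 2) (hst 1)
        hz hy hxz hxy (fun k4 k2 k1 k0 => mim3 k2 k4 k0 k1)
        (fun k3 k1 k4 k0 => mim2 k1 k3 k0 k4)
      exact conc h0 h1 h2 h3 h4
    have key34 : ∀ {y z : V}, y ∈ A 3 → z ∈ A 4 → G.Adj x y → G.Adj x z →
        ∀ c ∈ ⋃ i, A i, G.Adj x c := by
      intro y z hy hz hxy hxz
      obtain ⟨h4, h3, h2, h1, h0⟩ := mainP01 hH hB (symC c3) (symC c2) (symC c1) (symC c0)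
        (symA t2) t4 hP (symA t1) t3 (symA t0) n2 n1 n0 (hst 4) (hst 3) (hst 2)
        hz hy hxz hxy (fun k3 k2 k1 k0 => mim4 k3 k0 k1 k2)
        (fun k4 k2 k1 k0 => mim3 k2 k4 k0 k1)
      exact conc h0 h1 h2 h3 h4
    rcases fin5cases i j with h | h | h | h | h <;> subst h
    · exact absurd hab (hst i a ha b hb)
    · by_cases hi4 : i = 4
      · subst hi4
        exact absurd hab (hP a ha b hb)
      · rcases fin5cases 0 i with h0 | h0 | h0 | h0 | h0 <;> subst h0
        · exact key01 ha hb hxa hxb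
        · exact key12 ha hb hxa hxb
        · exact key23 ha hb hxa hxb
        · exact key34 ha hb hxa hxb
        · exact absurd (by decide) hi4
    · exact absurd hab (hg.2.2.2.1 i a ha b hb)
    · exact absurd hab.symm ((ei3 i ▸ hg.2.2.2.1 (i+3)) b hb a ha)
    · by_cases hi0 : i = 0
      · subst hi0
        exact absurd hab.symm (hP b hb a ha)
      · rcases fin5cases 0 i with h0 | h0 | h0 | h0 | h0 <;> subst h0
        · exact absurd rfl hi0
        · exact key01 hb ha hxb hxa
        · exact key12 hb ha hxb hxa
        · exact key23 hb ha hxb hxa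
        · exact key34 hb ha hxb hxa
def patP : Fin 5 → Fin 5 → Bool := fun i j => i.val + 1 == j.val || j.val + 1 == i.val
def patC : Fin 5 → Fin 5 → Bool := fun i j =>
  patP i j || (i == 0 && j == 4) || (i == 4 && j == 0)

set_option maxHeartbeats 1000000 in
lemma selP1 : ∀ np : Fin 5 → Bool,
    (∀ i j, patP i j = true → ¬(np i = true ∧ np j = true)) → (∃ i, np i = true) →
    ∃ i j k, np i = true ∧ patP i j = true ∧ np j = false ∧ patP k i = false ∧ k ≠ i ∧
      patP k j = false ∧ k ≠ j := by decide

set_option maxHeartbeats 1000000 in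
lemma selC1 : ∀ np : Fin 5 → Bool,
    (∀ i j, patC i j = true → ¬(np i = true ∧ np j = true)) → (∃ i, np i = true) →
    ∃ i j k, np i = true ∧ patC i j = true ∧ np j = false ∧ patC k i = false ∧ k ≠ i ∧
      patC k j = false ∧ k ≠ j := by decide

set_option maxHeartbeats 1000000 in
lemma selP2 : ∀ np : Fin 5 → Bool,
    (∀ i j, patP i j = true → ¬(np i = true ∧ np j = true)) → (∃ i, np i = true) →
    ∃ i k, np i = true ∧ np k = false ∧ patP k i = false ∧ k ≠ i := by decide

set_option maxHeartbeats 1000000 in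
lemma selC2 : ∀ np : Fin 5 → Bool,
    (∀ i j, patC i j = true → ¬(np i = true ∧ np j = true)) → (∃ i, np i = true) →
    ∃ i k, np i = true ∧ np k = false ∧ patC k i = false ∧ k ≠ i := by decide

set_option maxHeartbeats 1000000 in
lemma selP3 : ∀ np : Fin 5 → Bool,
    (∀ i j, patP i j = true → ¬(np i = true ∧ np j = true)) → ∃ k, np k = false := by decide

set_option maxHeartbeats 1000000 in
lemma selC3 : ∀ np : Fin 5 → Bool,
    (∀ i j, patC i j = true → ¬(np i = true ∧ np j = true)) → ∃ k, np k = false := by decide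

lemma selP4 : ∀ i : Fin 5, ∃ k, patP k i = false ∧ k ≠ i := by decide
lemma selC4 : ∀ i : Fin 5, ∃ k, patC k i = false ∧ k ≠ i := by decide

lemma bridgePc (hg : GoodTuple G A) :
    ∀ i j, patP i j = true → ∀ a ∈ A i, ∀ b ∈ A j, G.Adj a b := by
  have c0 : ∀ a ∈ A 0, ∀ b ∈ A 1, G.Adj a b := hg.2.2.1 0 (by decide)
  have c1 : ∀ a ∈ A 1, ∀ b ∈ A 2, G.Adj a b := hg.2.2.1 1 (by decide)
  have c2 : ∀ a ∈ A 2, ∀ b ∈ A 3, G.Adj a b := hg.2.2.1 2 (by decide)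
  have c3 : ∀ a ∈ A 3, ∀ b ∈ A 4, G.Adj a b := hg.2.2.1 3 (by decide)
  intro i j hij
  fin_cases i <;> fin_cases j <;>
    first
    | exact absurd hij (by decide)
    | exact c0 | exact symC c0 | exact c1 | exact symC c1
    | exact c2 | exact symC c2 | exact c3 | exact symC c3

lemma bridgeCc (hg : GoodTuple G A) (hC : CompleteTo G (A 4) (A 0)) :
    ∀ i j, patC i j = true → ∀ a ∈ A i, ∀ b ∈ A j, G.Adj a b := by
  have c0 : ∀ a ∈ A 0, ∀ b ∈ A 1, G.Adj a b := hg.2.2.1 0 (by decide)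
  have c1 : ∀ a ∈ A 1, ∀ b ∈ A 2, G.Adj a b := hg.2.2.1 1 (by decide)
  have c2 : ∀ a ∈ A 2, ∀ b ∈ A 3, G.Adj a b := hg.2.2.1 2 (by decide)
  have c3 : ∀ a ∈ A 3, ∀ b ∈ A 4, G.Adj a b := hg.2.2.1 3 (by decide)
  have c4 : ∀ a ∈ A 4, ∀ b ∈ A 0, G.Adj a b := hC
  intro i j hij
  fin_cases i <;> fin_cases j <;>
    first
    | exact absurd hij (by decide)
    | exact c0 | exact symC c0 | exact c1 | exact symC c1
    | exact c2 | exact symC c2 | exact c3 | exact symC c3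
    | exact c4 | exact symC c4

lemma bridgePa (hg : GoodTuple G A) (hP : AnticompleteTo G (A 4) (A 0)) :
    ∀ i j, i ≠ j → patP i j = false → ∀ a ∈ A i, ∀ b ∈ A j, ¬ G.Adj a b := by
  have t0 : ∀ a ∈ A 0, ∀ b ∈ A 2, ¬ G.Adj a b := hg.2.2.2.1 0
  have t1 : ∀ a ∈ A 1, ∀ b ∈ A 3, ¬ G.Adj a b := hg.2.2.2.1 1
  have t2 : ∀ a ∈ A 2, ∀ b ∈ A 4, ¬ G.Adj a b := hg.2.2.2.1 2
  have t3 : ∀ a ∈ A 3, ∀ b ∈ A 0, ¬ G.Adj a b := hg.2.2.2.1 3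
  have t4 : ∀ a ∈ A 4, ∀ b ∈ A 1, ¬ G.Adj a b := hg.2.2.2.1 4
  have t5 : ∀ a ∈ A 4, ∀ b ∈ A 0, ¬ G.Adj a b := hP
  intro i j hne hij
  fin_cases i <;> fin_cases j <;>
    first
    | exact absurd rfl hne
    | exact absurd hij (by decide)
    | exact t0 | exact symA t0 | exact t1 | exact symA t1
    | exact t2 | exact symA t2 | exact t3 | exact symA t3
    | exact t4 | exact symA t4 | exact t5 | exact symA t5

lemma bridgeCa (hg : GoodTuple G A) :
    ∀ i j, i ≠ j → patC i j = false → ∀ a ∈ A i, ∀ b ∈ A j, ¬ G.Adj a b := by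
  have t0 : ∀ a ∈ A 0, ∀ b ∈ A 2, ¬ G.Adj a b := hg.2.2.2.1 0
  have t1 : ∀ a ∈ A 1, ∀ b ∈ A 3, ¬ G.Adj a b := hg.2.2.2.1 1
  have t2 : ∀ a ∈ A 2, ∀ b ∈ A 4, ¬ G.Adj a b := hg.2.2.2.1 2
  have t3 : ∀ a ∈ A 3, ∀ b ∈ A 0, ¬ G.Adj a b := hg.2.2.2.1 3
  have t4 : ∀ a ∈ A 4, ∀ b ∈ A 1, ¬ G.Adj a b := hg.2.2.2.1 4
  intro i j hne hij
  fin_cases i <;> fin_cases j <;>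
    first
    | exact absurd rfl hne
    | exact absurd hij (by decide)
    | exact t0 | exact symA t0 | exact t1 | exact symA t1
    | exact t2 | exact symA t2 | exact t3 | exact symA t3
    | exact t4 | exact symA t4


end Work

/-- In the 5-tuple setup for a (house, bull)-free graph `G`, if
additionally every proper homogeneous set of `G` is a stable set, then no
triangle of `G` has two of its vertices in `A`. -/
theorem stmt13 {V : Type*} [Fintype V] (G : SimpleGraph V)
    (hHouse : FreeOf G house) (hBull : FreeOf G bull)
    (A : Fin 5 → Set V) (hA : MaximalGoodTuple G A)
    (hhom : ∀ S : Set V, IsProperHomogSet G S → IsStableSet G S) :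
    ∀ u v w : V, G.Adj u v → G.Adj v w → G.Adj u w →
      ¬ (u ∈ (⋃ i, A i) ∧ v ∈ (⋃ i, A i)) := by
  rintro u v w huv hvw huw ⟨hu, hv⟩
  obtain ⟨i, hui⟩ := Set.mem_iUnion.mp hu
  obtain ⟨j, hvj⟩ := Set.mem_iUnion.mp hv
  have hg := hA.1
  have hst := stableAll hHouse hBull hg hhom
  have hPII := PIIglobal hHouse hBull hA hhom
  have ei3 : ∀ i : Fin 5, i + 3 + 2 = i := fun i => by
    rw [add_assoc, show (3:Fin 5)+2 = 0 by decide]; exact add_zero i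
  have ei4 : ∀ i : Fin 5, i + 4 + 1 = i := fun i => by
    rw [add_assoc, show (4:Fin 5)+1 = 0 by decide]; exact add_zero i
  by_cases hw : w ∈ ⋃ i, A i
  · obtain ⟨k, hwk⟩ := Set.mem_iUnion.mp hw
    have hpl : ∀ {p q : Fin 5} {y z : V}, y ∈ A p → z ∈ A q → G.Adj y z →
        (q = p + 1 ∨ p = q + 1) := by
      intro p q y z hy hz hyz
      rcases fin5cases p q with h | h | h | h | h <;> subst h
      · exact absurd hyz (hst p y hy z hz)
      · exact Or.inl rfl
      · exact absurd hyz (hg.2.2.2.1 p y hy z hz)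
      · exact absurd hyz.symm ((ei3 p ▸ hg.2.2.2.1 (p+3)) z hz y hy)
      · exact Or.inr (ei4 p).symm
    exact (by decide : ∀ i j k : Fin 5, (j = i+1 ∨ i = j+1) → (k = j+1 ∨ j = k+1) →
      (k = i+1 ∨ i = k+1) → False) i j k (hpl hui hvj huv) (hpl hvj hwk hvw)
      (hpl hui hwk huw)
  · have hwc := hPII w hw i j u v hui hvj huv huw.symm hvw.symm
    rcases hg.2.2.2.2 with hC | hP
    · exact partIII hHouse hBull hhom hg.1 patC (bridgeCc hg hC) (bridgeCa hg)
        (by decide) (by decide) (by decide) (by decide)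
        selC1 selC2 selC3 selC4 hPII hw hwc
    · exact partIII hHouse hBull hhom hg.1 patP (bridgePc hg) (bridgePa hg hP)
        (by decide) (by decide) (by decide) (by decide)
        selP1 selP2 selP3 selP4 hPII hw hwc
end
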